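/- arXiv:1603.05244 — 16 statements merged into one kernel-verified Lean document; each statement's English description precedes it below -/
import Mathlib

section
/- Let N ≥ 2, let p, q be coprime positive integers, let x₀, y₀ be nonzero reals, φₓ, φ_y reals, and set φ₀ = (qφₓ − pφ_y)/π. For the Type I formation, the no-collision condition B ((x_i(τ), y_i(τ)) ≠ (x_j(τ), y_j(τ)) for all real τ and all i ≠ j) holds if and only if φ₀ + (p − q)/2 is not an integer and N is coprime with p and with q. -/
open Real Finset

private lemma sin_eq_sin_iff' (a b : ℝ) :
    Real.sin a = Real.sin b ↔ Real.sin ((a - b) / 2) = 0 ∨ Real.cos ((a + b) / 2) = 0 := by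
  rw [← sub_eq_zero, Real.sin_sub_sin, mul_eq_zero, mul_eq_zero]
  constructor
  · rintro ((h | h) | h)
    · norm_num at h
    · exact Or.inl h
    · exact Or.inr h
  · rintro (h | h) <;> simp [h]

private lemma no_dvd (N p : ℕ) (hN : 0 < N) (hNp : Nat.Coprime N p) {i j : ℕ}
    (hi : i ∈ Finset.Icc 1 N) (hj : j ∈ Finset.Icc 1 N) (hij : i ≠ j)
    (k : ℤ) (hk : (k : ℝ) * π = π * p * ((i : ℝ) - j) / N) : False := by
  simp only [Finset.mem_Icc] at hi hj
  have hN0 : (N : ℝ) ≠ 0 := Nat.cast_ne_zero.mpr hN.ne'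
  rw [eq_div_iff hN0] at hk
  have h3 : (k : ℝ) * N * π = (p : ℝ) * ((i : ℝ) - j) * π := by linear_combination hk
  have h4 : (k : ℝ) * N = (p : ℝ) * ((i : ℝ) - j) :=
    mul_right_cancel₀ Real.pi_ne_zero h3
  have h5 : k * N = (p : ℤ) * ((i : ℤ) - j) := by exact_mod_cast h4
  have hdvd : (N : ℤ) ∣ (p : ℤ) * ((i : ℤ) - j) := ⟨k, by rw [← h5]; ring⟩
  have hgcd : Int.gcd (N : ℤ) (p : ℤ) = 1 := by
    rw [Int.gcd_natCast_natCast]; exact hNp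
  have hd : (N : ℤ) ∣ ((i : ℤ) - j) :=
    Int.dvd_of_dvd_mul_right_of_gcd_one hdvd hgcd
  have habs : |(i : ℤ) - j| < N := by
    rw [abs_lt]; omega
  have := Int.eq_zero_of_abs_lt_dvd hd habs
  omega

private lemma exists_collision_aux (N p q : ℕ) (φx φy : ℝ) (hN : 2 ≤ N)
    (hq : 0 < q) (hNp : ¬ Nat.Coprime N p) :
    ∃ τ : ℝ, ∃ i ∈ Finset.Icc 1 N, ∃ j ∈ Finset.Icc 1 N, i ≠ j ∧
      Real.sin (2 * π * p * (τ + (i : ℝ) / N) + φx) =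
        Real.sin (2 * π * p * (τ + (j : ℝ) / N) + φx) ∧
      Real.sin (2 * π * q * (τ + (i : ℝ) / N) + φy) =
        Real.sin (2 * π * q * (τ + (j : ℝ) / N) + φy) := by
  have hN0 : 0 < N := by omega
  have hbd := Nat.gcd_dvd_left N p
  have had := Nat.gcd_dvd_right N p
  unfold Nat.Coprime at hNp
  obtain ⟨g, hgdef⟩ : ∃ g, Nat.gcd N p = g := ⟨_, rfl⟩
  rw [hgdef] at hbd had hNp
  obtain ⟨b, hb⟩ := hbd
  obtain ⟨a, ha⟩ := had
  have hgne : g ≠ 0 := by rintro rfl; simp at hb; omega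
  have hg1 : 1 < g := by omega
  have hb0 : 0 < b := by rcases Nat.eq_zero_or_pos b with rfl | h; · simp at hb; omega
                         · exact h
  have hbN : b < N := by
    have h2 : 2 * b ≤ g * b := Nat.mul_le_mul_right b hg1
    omega
  have hpd : p * b = a * N := by rw [ha, hb]; ring
  have hπ := Real.pi_ne_zero
  have hNr : (N : ℝ) ≠ 0 := Nat.cast_ne_zero.mpr hN0.ne'
  have hqr : (q : ℝ) ≠ 0 := Nat.cast_ne_zero.mpr hq.ne'
  refine ⟨(π / 2 - π * q * ((b : ℝ) + 2) / N - φy) / (2 * π * q), b + 1, ?_, 1, ?_, ?_, ?_, ?_⟩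
  · simp only [Finset.mem_Icc]; omega
  · simp only [Finset.mem_Icc]; omega
  · omega
  · apply (sin_eq_sin_iff' _ _).mpr (Or.inl _)
    have heq : ((2 * π * p * ((π / 2 - π * q * ((b : ℝ) + 2) / N - φy) / (2 * π * q)
          + ((b : ℕ) + 1 : ℕ) / N) + φx) -
        (2 * π * p * ((π / 2 - π * q * ((b : ℝ) + 2) / N - φy) / (2 * π * q)
          + (1 : ℕ) / N) + φx)) / 2 = (a : ℝ) * π := by
      have hpd' : (p : ℝ) * b = (a : ℝ) * N := by exact_mod_cast hpd
      have hstep : ((2 * π * (p:ℝ) * ((π / 2 - π * q * ((b : ℝ) + 2) / N - φy) / (2 * π * q)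
            + ((b : ℕ) + 1 : ℕ) / N) + φx) -
          (2 * π * (p:ℝ) * ((π / 2 - π * q * ((b : ℝ) + 2) / N - φy) / (2 * π * q)
            + (1 : ℕ) / N) + φx)) / 2 = π * (p : ℝ) * b / N := by
        push_cast; ring
      rw [hstep, div_eq_iff hNr]
      linear_combination π * hpd'
    rw [heq]
    exact_mod_cast Real.sin_nat_mul_pi a
  · apply (sin_eq_sin_iff' _ _).mpr (Or.inr _)
    have heq : ((2 * π * q * ((π / 2 - π * q * ((b : ℝ) + 2) / N - φy) / (2 * π * q)
          + ((b : ℕ) + 1 : ℕ) / N) + φy) +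
        (2 * π * q * ((π / 2 - π * q * ((b : ℝ) + 2) / N - φy) / (2 * π * q)
          + (1 : ℕ) / N) + φy)) / 2 = π / 2 := by
      push_cast
      field_simp
      ring
    rw [heq]
    exact Real.cos_pi_div_two

/-- For a Type I formation of `N ≥ 2` deputy satellites with coprime positive
frequencies `p, q` and nonzero amplitudes, the no-collision condition B holds
iff `φ₀ + (p - q)/2` is not an integer and `N` is coprime with both `p` and `q`,
where `φ₀ = (q·φx - p·φy)/π`. -/
theorem typeI_noCollision_iff (N p q : ℕ) (hN : 2 ≤ N) (hp : 0 < p) (hq : 0 < q)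
    (hpq : Nat.Coprime p q) (x₀ y₀ φx φy φ₀ : ℝ) (hx₀ : x₀ ≠ 0) (hy₀ : y₀ ≠ 0)
    (hφ₀ : φ₀ = ((q : ℝ) * φx - (p : ℝ) * φy) / π) :
    (∀ τ : ℝ, ∀ i ∈ Finset.Icc 1 N, ∀ j ∈ Finset.Icc 1 N, i ≠ j →
        (x₀ * Real.sin (2 * π * p * (τ + (i : ℝ) / N) + φx),
         y₀ * Real.sin (2 * π * q * (τ + (i : ℝ) / N) + φy)) ≠
        (x₀ * Real.sin (2 * π * p * (τ + (j : ℝ) / N) + φx),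
         y₀ * Real.sin (2 * π * q * (τ + (j : ℝ) / N) + φy))) ↔
    ((¬ ∃ m : ℤ, φ₀ + ((p : ℝ) - (q : ℝ)) / 2 = (m : ℝ)) ∧
     Nat.Coprime N p ∧ Nat.Coprime N q) := by
  have hπ := Real.pi_ne_zero
  have hN0 : 0 < N := by omega
  have hNr : (N : ℝ) ≠ 0 := Nat.cast_ne_zero.mpr hN0.ne'
  have hpr : (p : ℝ) ≠ 0 := Nat.cast_ne_zero.mpr hp.ne'
  have hqr : (q : ℝ) ≠ 0 := Nat.cast_ne_zero.mpr hq.ne'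
  constructor
  · intro hB
    refine ⟨?_, ?_, ?_⟩
    · rintro ⟨m, hm⟩
      obtain ⟨u, v, huv⟩ : ∃ u v : ℤ, u * p + v * q = 1 :=
        Nat.isCoprime_iff_coprime.mpr hpq
      set k : ℤ := m * v with hkdef
      set l : ℤ := -(m * u) with hldef
      have huv' : (u : ℝ) * p + (v : ℝ) * q = 1 := by exact_mod_cast huv
      have hkl : (k : ℝ) * q - (l : ℝ) * p = (m : ℝ) := by
        rw [hkdef, hldef]; push_cast; linear_combination (m : ℝ) * huv'
      have hkey : (q : ℝ) * φx - p * φy = ((m : ℝ) + ((q : ℝ) - p) / 2) * π := by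
        rw [hφ₀] at hm
        field_simp at hm
        linarith
      set τ : ℝ := ((2 * (k : ℝ) + 1) * π / 2 - π * p * 3 / N - φx) / (2 * π * p) with hτ
      have hx' : 2 * π * (p : ℝ) * τ = (2 * (k : ℝ) + 1) * π / 2 - π * p * 3 / N - φx := by
        rw [hτ]; field_simp
      have hy' : 2 * π * (q : ℝ) * τ = (2 * (l : ℝ) + 1) * π / 2 - π * q * 3 / N - φy := by
        apply mul_left_cancel₀ hpr
        calc (p : ℝ) * (2 * π * q * τ) = (q : ℝ) * (2 * π * p * τ) := by ring
          _ = (q : ℝ) * ((2 * (k : ℝ) + 1) * π / 2 - π * p * 3 / N - φx) := by rw [hx']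
          _ = (p : ℝ) * ((2 * (l : ℝ) + 1) * π / 2 - π * q * 3 / N - φy) := by
              linear_combination - hkey + π * hkl
      have hsx : Real.sin (2 * π * p * (τ + (2 : ℕ) / N) + φx) =
          Real.sin (2 * π * p * (τ + (1 : ℕ) / N) + φx) := by
        apply (sin_eq_sin_iff' _ _).mpr (Or.inr _)
        rw [Real.cos_eq_zero_iff]
        exact ⟨k, by push_cast; linear_combination hx'⟩
      have hsy : Real.sin (2 * π * q * (τ + (2 : ℕ) / N) + φy) =
          Real.sin (2 * π * q * (τ + (1 : ℕ) / N) + φy) := by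
        apply (sin_eq_sin_iff' _ _).mpr (Or.inr _)
        rw [Real.cos_eq_zero_iff]
        exact ⟨l, by push_cast; linear_combination hy'⟩
      exact hB τ 2 (by simp [Finset.mem_Icc]; omega) 1 (by simp [Finset.mem_Icc]; omega)
        (by norm_num) (by rw [hsx, hsy])
    · by_contra hNp
      obtain ⟨τ, i, hi, j, hj, hij, hsx, hsy⟩ :=
        exists_collision_aux N p q φx φy hN hq hNp
      exact hB τ i hi j hj hij (by rw [hsx, hsy])
    · by_contra hNq
      obtain ⟨τ, i, hi, j, hj, hij, hsy, hsx⟩ :=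
        exists_collision_aux N q p φy φx hN hp hNq
      exact hB τ i hi j hj hij (by rw [hsx, hsy])
  · rintro ⟨hm, hNp, hNq⟩ τ i hi j hj hij hcol
    rw [Prod.mk.injEq] at hcol
    obtain ⟨hx, hy⟩ := hcol
    replace hx := mul_left_cancel₀ hx₀ hx
    replace hy := mul_left_cancel₀ hy₀ hy
    rw [sin_eq_sin_iff'] at hx hy
    rcases hx with hx | hx
    · rw [Real.sin_eq_zero_iff] at hx
      obtain ⟨k, hk⟩ := hx
      exact no_dvd N p hN0 hNp hi hj hij k (by linear_combination hk)
    rcases hy with hy | hy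
    · rw [Real.sin_eq_zero_iff] at hy
      obtain ⟨k, hk⟩ := hy
      exact no_dvd N q hN0 hNq hi hj hij k (by linear_combination hk)
    rw [Real.cos_eq_zero_iff] at hx hy
    obtain ⟨k, hk⟩ := hx
    obtain ⟨l, hl⟩ := hy
    apply hm
    refine ⟨k * q - l * p, ?_⟩
    have key : (q : ℝ) * φx - p * φy = (((k * q - l * p : ℤ) : ℝ) + ((q : ℝ) - p) / 2) * π := by
      push_cast
      linear_combination (q : ℝ) * hk - (p : ℝ) * hl
    rw [hφ₀, key, mul_div_cancel_right₀ _ hπ]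
    push_cast
    ring
end

section
/- Let N ≥ 3, let p, q be coprime positive integers, let x₀, y₀ be nonzero reals, φₓ, φ_y reals, and set φ₀ = (qφₓ − pφ_y)/π. For the Type II formation, the no-collision condition B holds if and only if there is no integer m with (φ₀ + (p − q)/2)·N = m·gcd(N, q − p). -/
open Real Finset

/-!
Deputies `i ≠ j` have distinct phase offsets `2πi/N`, `2πj/N` modulo `2π`, so two of their
sines agree exactly when the two arguments add up to `π` modulo `2π`. Doing this in both
coordinates and eliminating `τ` (possible since `p`, `q` are coprime) leaves the single condition
`(φ₀ + (p - q)/2)·N ≡ -(q - p)(i + j) (mod N)`. For `N ≥ 3` the sums `i + j` of distinct indices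
run through every residue class mod `N`, so the attainable right-hand sides are exactly the
multiples of `gcd(N, q - p)`.
-/

lemma intCast_sub_ne_mul_of_mem_Icc {N i j : ℕ} (hi : i ∈ Icc 1 N) (hj : j ∈ Icc 1 N)
    (hij : i ≠ j) (k : ℤ) : (j : ℤ) - i ≠ k * N := by
  rw [mem_Icc] at hi hj
  intro h
  have hdvd : (N : ℤ) ∣ (j : ℤ) - i := ⟨k, by rw [h, mul_comm]⟩
  have := Int.eq_zero_of_abs_lt_dvd hdvd (abs_lt.2 ⟨by omega, by omega⟩)
  omega

lemma sin_eq_sin_iff_of_mem_Icc {N i j : ℕ} (hi : i ∈ Icc 1 N) (hj : j ∈ Icc 1 N) (hij : i ≠ j)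
    (a φ : ℝ) :
    sin (2 * π * (a + i / N) + φ) = sin (2 * π * (a + j / N) + φ) ↔
      ∃ k : ℤ, 2 * a + (φ / π + (i + j) / N - 1 / 2) = k := by
  have hN : (N : ℝ) ≠ 0 := by rw [mem_Icc] at hi; exact_mod_cast (by omega : N ≠ 0)
  rw [sin_eq_sin_iff]
  refine exists_congr fun k => ?_
  have hshift : 2 * π * (a + j / N) + φ ≠ 2 * k * π + (2 * π * (a + i / N) + φ) := by
    intro h
    apply intCast_sub_ne_mul_of_mem_Icc hi hj hij k
    have h' : ((j : ℝ) - i) * (2 * π) = k * N * (2 * π) := by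
      field_simp at h
      linear_combination h
    exact_mod_cast mul_right_cancel₀ (by positivity) h'
  rw [or_iff_right hshift]
  have hπ : π ≠ 0 := pi_ne_zero
  field_simp
  constructor <;> intro h <;> linear_combination h

lemma exists_mul_add_eq_int_and_mul_add_eq_int_iff {p q : ℤ} (hpq : IsCoprime p q) (hp : p ≠ 0)
    (a b : ℝ) :
    (∃ τ : ℝ, (∃ k : ℤ, p * τ + a = k) ∧ ∃ l : ℤ, q * τ + b = l) ↔
      ∃ t : ℤ, q * a - p * b = t := by
  constructor
  · rintro ⟨τ, ⟨k, hk⟩, l, hl⟩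
    exact ⟨q * k - p * l, by push_cast; linear_combination q * hk - p * hl⟩
  · rintro ⟨t, ht⟩
    obtain ⟨u, v, huv⟩ := hpq
    have huvR : (u : ℝ) * p + v * q = 1 := by exact_mod_cast huv
    have hpR : (p : ℝ) ≠ 0 := by exact_mod_cast hp
    -- `q k - p l = t` for `k = t v`, `l = -t u`
    refine ⟨(t * v - a) / p, ⟨t * v, ?_⟩, -(t * u), ?_⟩
    · push_cast
      field_simp
      ring
    · push_cast
      field_simp
      linear_combination (t : ℝ) * huvR - ht

lemma exists_collision_iff {N p q i j : ℕ} (hp : 0 < p) (hpq : p.Coprime q) (hi : i ∈ Icc 1 N)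
    (hj : j ∈ Icc 1 N) (hij : i ≠ j) (φx φy : ℝ) :
    (∃ τ : ℝ, sin (2 * π * (p * τ + i / N) + φx) = sin (2 * π * (p * τ + j / N) + φx) ∧
        sin (2 * π * (q * τ + i / N) + φy) = sin (2 * π * (q * τ + j / N) + φy)) ↔
      ∃ t : ℤ, ((q * φx - p * φy) / π + (p - q) / 2) * N = t * N - (q - p) * (i + j) := by
  have hN : (N : ℝ) ≠ 0 := by rw [mem_Icc] at hi; exact_mod_cast (by omega : N ≠ 0)
  have hπ : π ≠ 0 := pi_ne_zero
  calc _ ↔ ∃ τ : ℝ, (∃ k : ℤ, ((p : ℤ) : ℝ) * (2 * τ) + (φx / π + (i + j) / N - 1 / 2) = k) ∧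
          ∃ l : ℤ, ((q : ℤ) : ℝ) * (2 * τ) + (φy / π + (i + j) / N - 1 / 2) = l := by
        simp only [sin_eq_sin_iff_of_mem_Icc hi hj hij, Int.cast_natCast, mul_left_comm (2 : ℝ)]
    _ ↔ ∃ τ : ℝ, (∃ k : ℤ, ((p : ℤ) : ℝ) * τ + (φx / π + (i + j) / N - 1 / 2) = k) ∧
          ∃ l : ℤ, ((q : ℤ) : ℝ) * τ + (φy / π + (i + j) / N - 1 / 2) = l := by
        conv_rhs => rw [(mul_left_surjective₀ (two_ne_zero' ℝ)).exists]
    _ ↔ ∃ t : ℤ, ((q : ℤ) : ℝ) * (φx / π + (i + j) / N - 1 / 2) -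
          ((p : ℤ) : ℝ) * (φy / π + (i + j) / N - 1 / 2) = t :=
        exists_mul_add_eq_int_and_mul_add_eq_int_iff (Nat.isCoprime_iff_coprime.2 hpq)
          (by exact_mod_cast hp.ne') _ _
    _ ↔ _ := by
        refine exists_congr fun t => ?_
        simp only [Int.cast_natCast]
        field_simp
        constructor <;> intro h <;> linear_combination h

lemma exists_add_modEq_of_mem_Icc {N : ℕ} (hN : 3 ≤ N) (r : ℤ) :
    ∃ i ∈ Icc 1 N, ∃ j ∈ Icc 1 N, i ≠ j ∧ ((i + j : ℕ) : ℤ) ≡ r [ZMOD N] := by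
  obtain ⟨s, hs3, hsN, hsr⟩ : ∃ s : ℕ, 3 ≤ s ∧ s ≤ N + 2 ∧ (s : ℤ) ≡ r [ZMOD N] := by
    have h0 := Int.emod_nonneg (r - 3) (by omega : (N : ℤ) ≠ 0)
    have hlt := Int.emod_lt_of_pos (r - 3) (by omega : (0 : ℤ) < N)
    refine ⟨((r - 3) % N + 3).toNat, by omega, by omega, ?_⟩
    rw [Int.toNat_of_nonneg (by omega)]
    simpa using (Int.mod_modEq (r - 3) N).add_right 3
  by_cases hs : s ≤ N + 1
  · refine ⟨1, by simp only [mem_Icc]; omega, s - 1, by simp only [mem_Icc]; omega, by omega, ?_⟩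
    rwa [show 1 + (s - 1) = s by omega]
  · refine ⟨2, by simp only [mem_Icc]; omega, N, by simp only [mem_Icc]; omega, by omega, ?_⟩
    rwa [show 2 + N = s by omega]

lemma exists_eq_mul_sub_mul_add_iff {N : ℕ} (hN : 3 ≤ N) (c : ℤ) (r : ℝ) :
    (∃ i ∈ Icc 1 N, ∃ j ∈ Icc 1 N, i ≠ j ∧ ∃ t : ℤ, r = t * N - c * (i + j)) ↔
      ∃ m : ℤ, r = m * (Int.gcd N c : ℝ) := by
  constructor
  · rintro ⟨i, -, j, -, -, t, rfl⟩
    obtain ⟨a, ha⟩ := Int.gcd_dvd_left (N : ℤ) c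
    obtain ⟨b, hb⟩ := Int.gcd_dvd_right (N : ℤ) c
    have haR : (N : ℝ) = Int.gcd N c * a := by exact_mod_cast ha
    have hbR : (c : ℝ) = Int.gcd N c * b := by exact_mod_cast hb
    refine ⟨t * a - b * (i + j), ?_⟩
    push_cast
    linear_combination t * haR - (i + j : ℝ) * hbR
  · rintro ⟨m, rfl⟩
    obtain ⟨i, hi, j, hj, hij, hmod⟩ := exists_add_modEq_of_mem_Icc hN (-(m * Int.gcdB N c))
    obtain ⟨w, hw⟩ := hmod.dvd
    have hbez : (Int.gcd N c : ℝ) = N * Int.gcdA N c + c * Int.gcdB N c := by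
      exact_mod_cast Int.gcd_eq_gcd_ab N c
    have hwR : -(m * Int.gcdB N c : ℝ) - (i + j) = N * w := by exact_mod_cast hw
    refine ⟨i, hi, j, hj, hij, m * Int.gcdA N c - c * w, ?_⟩
    push_cast
    linear_combination (m : ℝ) * hbez - (c : ℝ) * hwR

theorem typeII_noCollision_iff_general (N p q : ℕ) (hN : 3 ≤ N) (hp : 0 < p)
    (hpq : Nat.Coprime p q) (x₀ y₀ φx φy φ₀ : ℝ) (hx₀ : x₀ ≠ 0) (hy₀ : y₀ ≠ 0)
    (hφ₀ : φ₀ = ((q : ℝ) * φx - (p : ℝ) * φy) / π) :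
    (∀ τ : ℝ, ∀ i ∈ Finset.Icc 1 N, ∀ j ∈ Finset.Icc 1 N, i ≠ j →
        (x₀ * Real.sin (2 * π * ((p : ℝ) * τ + (i : ℝ) / N) + φx),
         y₀ * Real.sin (2 * π * ((q : ℝ) * τ + (i : ℝ) / N) + φy)) ≠
        (x₀ * Real.sin (2 * π * ((p : ℝ) * τ + (j : ℝ) / N) + φx),
         y₀ * Real.sin (2 * π * ((q : ℝ) * τ + (j : ℝ) / N) + φy))) ↔
    ¬ ∃ m : ℤ, (φ₀ + ((p : ℝ) - (q : ℝ)) / 2) * (N : ℝ) =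
        (m : ℝ) * (Int.gcd (N : ℤ) ((q : ℤ) - (p : ℤ)) : ℝ) := by
  subst hφ₀
  rw [← exists_eq_mul_sub_mul_add_iff hN, ← not_iff_not, not_not]
  push Not
  simp only [Prod.mk.injEq, mul_right_inj' hx₀, mul_right_inj' hy₀]
  push_cast
  constructor
  · rintro ⟨τ, i, hi, j, hj, hij, hcoll⟩
    exact ⟨i, hi, j, hj, hij, (exists_collision_iff hp hpq hi hj hij φx φy).1 ⟨τ, hcoll⟩⟩
  · rintro ⟨i, hi, j, hj, hij, ht⟩
    obtain ⟨τ, hcoll⟩ := (exists_collision_iff hp hpq hi hj hij φx φy).2 ht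
    exact ⟨τ, i, hi, j, hj, hij, hcoll⟩

/-- For a Type II formation of `N ≥ 3` deputy satellites with coprime positive
frequencies `p, q` and nonzero amplitudes, the no-collision condition B holds
iff `(φ₀ + (p - q)/2)·N` is not an integer multiple of `gcd(N, q - p)`,
where `φ₀ = (q·φx - p·φy)/π`. -/
theorem typeII_noCollision_iff (N p q : ℕ) (hN : 3 ≤ N) (hp : 0 < p) (hq : 0 < q)
    (hpq : Nat.Coprime p q) (x₀ y₀ φx φy φ₀ : ℝ) (hx₀ : x₀ ≠ 0) (hy₀ : y₀ ≠ 0)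
    (hφ₀ : φ₀ = ((q : ℝ) * φx - (p : ℝ) * φy) / π) :
    (∀ τ : ℝ, ∀ i ∈ Finset.Icc 1 N, ∀ j ∈ Finset.Icc 1 N, i ≠ j →
        (x₀ * Real.sin (2 * π * ((p : ℝ) * τ + (i : ℝ) / N) + φx),
         y₀ * Real.sin (2 * π * ((q : ℝ) * τ + (i : ℝ) / N) + φy)) ≠
        (x₀ * Real.sin (2 * π * ((p : ℝ) * τ + (j : ℝ) / N) + φx),
         y₀ * Real.sin (2 * π * ((q : ℝ) * τ + (j : ℝ) / N) + φy))) ↔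
    ¬ ∃ m : ℤ, (φ₀ + ((p : ℝ) - (q : ℝ)) / 2) * (N : ℝ) =
        (m : ℝ) * (Int.gcd (N : ℤ) ((q : ℤ) - (p : ℤ)) : ℝ) :=
  typeII_noCollision_iff_general N p q hN hp hpq x₀ y₀ φx φy φ₀ hx₀ hy₀ hφ₀
end

section
/- Let p, q be coprime positive integers, let x₀, y₀ be nonzero reals, φₓ, φ_y reals, and set φ₀ = (qφₓ − pφ_y)/π. For the Type II formation with N = 2 deputy satellites, the no-collision condition B holds if and only if φ₀ is not an integer. -/
/-!
Both satellites coincide at time `τ` exactly when each coordinate is unchanged by the half-turn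
phase shift `θ ↦ θ + π`, i.e. when `sin (2πpτ + φx) = 0` and `sin (2πqτ + φy) = 0`. Writing these
as `2πpτ + φx = kπ` and `2πqτ + φy = lπ` and eliminating `τ` gives `qφx - pφy = (qk - pl)π`;
conversely, by Bézout every integer `m` is of the form `qk - pl`, which yields a common zero
whenever `qφx - pφy = mπ`.
-/

open Real Finset

lemma forall_mem_Icc_one_two_ne_iff {α : Type*} (f : ℕ → α) :
    (∀ i ∈ Icc (1 : ℕ) 2, ∀ j ∈ Icc (1 : ℕ) 2, i ≠ j → f i ≠ f j) ↔ f 1 ≠ f 2 := by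
  refine ⟨fun h => h 1 (by simp) 2 (by simp) (by norm_num), fun h i hi j hj hij => ?_⟩
  obtain ⟨hi₁, hi₂⟩ := mem_Icc.mp hi
  obtain ⟨hj₁, hj₂⟩ := mem_Icc.mp hj
  interval_cases i <;> interval_cases j
  exacts [absurd rfl hij, h, h.symm, absurd rfl hij]

lemma sin_add_half_turn_eq_sin_add_turn_iff (s φ : ℝ) :
    sin (2 * π * (s + 1 / 2) + φ) = sin (2 * π * (s + 1) + φ) ↔ sin (2 * π * s + φ) = 0 := by
  have half : 2 * π * (s + 1 / 2) + φ = (2 * π * s + φ) + π := by ring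
  have full : 2 * π * (s + 1) + φ = (2 * π * s + φ) + 2 * π := by ring
  rw [half, full, sin_add_pi, sin_add_two_pi, neg_eq_self]

lemma exists_sin_eq_zero_and_sin_eq_zero_iff {p q : ℤ} (hpq : IsCoprime p q) (a b : ℝ) :
    (∃ τ : ℝ, sin (2 * π * (p * τ) + a) = 0 ∧ sin (2 * π * (q * τ) + b) = 0) ↔
      ∃ m : ℤ, q * a - p * b = m * π := by
  simp only [sin_eq_zero_iff]
  constructor
  · rintro ⟨τ, ⟨k, hk⟩, ⟨l, hl⟩⟩
    exact ⟨q * k - p * l, by push_cast; linear_combination (-q : ℝ) * hk + p * hl⟩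
  · rintro ⟨m, hm⟩
    obtain ⟨u, v, huv⟩ := hpq
    have huvR : (u : ℝ) * p + v * q = 1 := by exact_mod_cast huv
    -- `τ = -(ua + vb)/(2π)` turns the two phases into `v m π` and `-u m π`
    refine ⟨-(u * a + v * b) / (2 * π), ⟨v * m, ?_⟩, ⟨-(u * m), ?_⟩⟩ <;>
      push_cast <;> field_simp
    · linear_combination (-v) * hm + a * huvR
    · linear_combination u * hm + b * huvR

theorem typeII_noCollision_two_iff_general (p q : ℕ)
    (hpq : Nat.Coprime p q) (x₀ y₀ φx φy φ₀ : ℝ) (hx₀ : x₀ ≠ 0) (hy₀ : y₀ ≠ 0)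
    (hφ₀ : φ₀ = ((q : ℝ) * φx - (p : ℝ) * φy) / π) :
    (∀ τ : ℝ, ∀ i ∈ Finset.Icc (1:ℕ) 2, ∀ j ∈ Finset.Icc (1:ℕ) 2, i ≠ j →
        (x₀ * Real.sin (2 * π * ((p : ℝ) * τ + (i : ℝ) / 2) + φx),
         y₀ * Real.sin (2 * π * ((q : ℝ) * τ + (i : ℝ) / 2) + φy)) ≠
        (x₀ * Real.sin (2 * π * ((p : ℝ) * τ + (j : ℝ) / 2) + φx),
         y₀ * Real.sin (2 * π * ((q : ℝ) * τ + (j : ℝ) / 2) + φy))) ↔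
    ¬ ∃ m : ℤ, φ₀ = (m : ℝ) := by
  have common_zero := exists_sin_eq_zero_and_sin_eq_zero_iff
    (Nat.isCoprime_iff_coprime.mpr hpq) φx φy
  push_cast at common_zero
  refine (forall_congr' fun τ => forall_mem_Icc_one_two_ne_iff _).trans ?_
  simp only [Nat.cast_one, Nat.cast_ofNat, div_self (two_ne_zero (α := ℝ)), ne_eq, Prod.mk.injEq,
    mul_right_inj' hx₀, mul_right_inj' hy₀, sin_add_half_turn_eq_sin_add_turn_iff, ← not_exists,
    common_zero, hφ₀, div_eq_iff pi_ne_zero]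

/-- For a Type II formation of `N = 2` deputy satellites with coprime positive
frequencies `p, q` and nonzero amplitudes, the no-collision condition B holds
iff `φ₀ = (q·φx - p·φy)/π` is not an integer. -/
theorem typeII_noCollision_two_iff (p q : ℕ) (hp : 0 < p) (hq : 0 < q)
    (hpq : Nat.Coprime p q) (x₀ y₀ φx φy φ₀ : ℝ) (hx₀ : x₀ ≠ 0) (hy₀ : y₀ ≠ 0)
    (hφ₀ : φ₀ = ((q : ℝ) * φx - (p : ℝ) * φy) / π) :
    (∀ τ : ℝ, ∀ i ∈ Finset.Icc (1:ℕ) 2, ∀ j ∈ Finset.Icc (1:ℕ) 2, i ≠ j →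
        (x₀ * Real.sin (2 * π * ((p : ℝ) * τ + (i : ℝ) / 2) + φx),
         y₀ * Real.sin (2 * π * ((q : ℝ) * τ + (i : ℝ) / 2) + φy)) ≠
        (x₀ * Real.sin (2 * π * ((p : ℝ) * τ + (j : ℝ) / 2) + φx),
         y₀ * Real.sin (2 * π * ((q : ℝ) * τ + (j : ℝ) / 2) + φy))) ↔
    ¬ ∃ m : ℤ, φ₀ = (m : ℝ) :=
  typeII_noCollision_two_iff_general p q hpq x₀ y₀ φx φy φ₀ hx₀ hy₀ hφ₀
end

section
/- Let p, q be coprime positive integers, let x₀, y₀ be nonzero reals and φₓ, φ_y reals, and set φ₀ = (qφₓ − pφ_y)/π. The Lissajous curve x(τ) = x₀ sin(2πpτ + φₓ), y(τ) = y₀ sin(2πqτ + φ_y) passes through the origin (i.e., there exists τ ∈ ℝ with x(τ) = 0 and y(τ) = 0) if and only if φ₀ is an integer. -/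
open Real

/-!
If `2πpτ + φx = kπ` and `2πqτ + φy = lπ`, eliminating `τ` gives `qφx - pφy = (kq - lp)π`.
Conversely, when `p` and `q` are coprime, Bézout writes any `m` as `kq - lp`; solving the first
equation for `τ` then solves the second one too.
-/

theorem exists_int_of_sin_two_pi_mul_add_eq_zero {p q : ℤ} {α β τ : ℝ}
    (hα : sin (2 * π * p * τ + α) = 0) (hβ : sin (2 * π * q * τ + β) = 0) :
    ∃ m : ℤ, q * α - p * β = m * π := by
  obtain ⟨k, hk⟩ := sin_eq_zero_iff.mp hα
  obtain ⟨l, hl⟩ := sin_eq_zero_iff.mp hβ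
  exact ⟨k * q - l * p, by push_cast; linear_combination (p : ℝ) * hl - (q : ℝ) * hk⟩

theorem exists_sin_two_pi_mul_add_eq_zero_of_isCoprime {p q : ℤ} (hp : p ≠ 0)
    (hpq : IsCoprime p q) {α β : ℝ} {m : ℤ} (hm : q * α - p * β = m * π) :
    ∃ τ : ℝ, sin (2 * π * p * τ + α) = 0 ∧ sin (2 * π * q * τ + β) = 0 := by
  obtain ⟨a, b, hab⟩ := hpq
  have hkl : ((m * b : ℤ) : ℝ) * q - ((-(m * a) : ℤ) : ℝ) * p = m := by
    push_cast
    linear_combination (m : ℝ) * (by exact_mod_cast hab : (a : ℝ) * p + b * q = 1)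
  have hp' : (p : ℝ) ≠ 0 := Int.cast_ne_zero.mpr hp
  refine ⟨((m * b : ℤ) * π - α) / (2 * π * p), ?_, ?_⟩
  · have hx : 2 * π * p * (((m * b : ℤ) * π - α) / (2 * π * p)) + α = (m * b : ℤ) * π := by
      field_simp
      ring
    rw [hx, sin_int_mul_pi]
  · have hy : 2 * π * q * (((m * b : ℤ) * π - α) / (2 * π * p)) + β = (-(m * a) : ℤ) * π := by
      field_simp
      linear_combination π * hkl - hm
    rw [hy, sin_int_mul_pi]

theorem exists_sin_two_pi_mul_add_eq_zero_iff {p q : ℤ} (hp : p ≠ 0) (hpq : IsCoprime p q)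
    (α β : ℝ) :
    (∃ τ : ℝ, sin (2 * π * p * τ + α) = 0 ∧ sin (2 * π * q * τ + β) = 0) ↔
      ∃ m : ℤ, q * α - p * β = m * π :=
  ⟨fun ⟨_, hα, hβ⟩ ↦ exists_int_of_sin_two_pi_mul_add_eq_zero hα hβ,
    fun ⟨_, hm⟩ ↦ exists_sin_two_pi_mul_add_eq_zero_of_isCoprime hp hpq hm⟩

theorem lissajous_through_origin_iff_general (p q : ℕ) (hp : 0 < p)
    (hpq : Nat.Coprime p q) (x₀ y₀ φx φy φ₀ : ℝ) (hx₀ : x₀ ≠ 0) (hy₀ : y₀ ≠ 0)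
    (hφ₀ : φ₀ = ((q : ℝ) * φx - (p : ℝ) * φy) / π) :
    (∃ τ : ℝ, x₀ * Real.sin (2 * π * p * τ + φx) = 0 ∧
              y₀ * Real.sin (2 * π * q * τ + φy) = 0) ↔
    ∃ m : ℤ, φ₀ = (m : ℝ) := by
  have key := exists_sin_two_pi_mul_add_eq_zero_iff (p := p) (q := q)
    (Int.natCast_ne_zero.mpr hp.ne') (Nat.isCoprime_iff_coprime.mpr hpq) φx φy
  simp only [Int.cast_natCast] at key
  simp only [mul_eq_zero_iff_left hx₀, mul_eq_zero_iff_left hy₀, key, hφ₀,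
    div_eq_iff pi_ne_zero]

/-- The Lissajous curve `τ ↦ (x₀ sin(2πpτ + φx), y₀ sin(2πqτ + φy))` with coprime
positive frequencies `p, q` and nonzero amplitudes passes through the origin iff
`φ₀ = (q·φx - p·φy)/π` is an integer. -/
theorem lissajous_through_origin_iff (p q : ℕ) (hp : 0 < p) (hq : 0 < q)
    (hpq : Nat.Coprime p q) (x₀ y₀ φx φy φ₀ : ℝ) (hx₀ : x₀ ≠ 0) (hy₀ : y₀ ≠ 0)
    (hφ₀ : φ₀ = ((q : ℝ) * φx - (p : ℝ) * φy) / π) :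
    (∃ τ : ℝ, x₀ * Real.sin (2 * π * p * τ + φx) = 0 ∧
              y₀ * Real.sin (2 * π * q * τ + φy) = 0) ↔
    ∃ m : ℤ, φ₀ = (m : ℝ) :=
  lissajous_through_origin_iff_general p q hp hpq x₀ y₀ φx φy φ₀ hx₀ hy₀ hφ₀
end

section
/- Let N ≥ 2, let p, q be coprime positive integers, let x₀, y₀ be nonzero reals, φₓ, φ_y reals, and set φ₀ = (qφₓ − pφ_y)/π. For the Type II formation, condition C ((x_i(τ), y_i(τ)) ≠ (0, 0) for all i = 1, …, N and all real τ) holds if and only if φ₀ cannot be written in the form a + 2b(q − p)/N with integers a, b. -/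
open Real Finset


lemma fwd (N p q : ℕ) (hN : 2 ≤ N) (φx φy : ℝ) (i : ℕ) (τ : ℝ)
    (hx : Real.sin (2 * π * ((p : ℝ) * τ + (i : ℝ) / N) + φx) = 0)
    (hy : Real.sin (2 * π * ((q : ℝ) * τ + (i : ℝ) / N) + φy) = 0) :
    ∃ a b : ℤ, ((q : ℝ) * φx - (p : ℝ) * φy) / π
      = (a : ℝ) + 2 * (b : ℝ) * ((q : ℝ) - (p : ℝ)) / N := by
  obtain ⟨k, hk⟩ := Real.sin_eq_zero_iff.mp hx
  obtain ⟨l, hl⟩ := Real.sin_eq_zero_iff.mp hy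
  have hπ : (π : ℝ) ≠ 0 := Real.pi_ne_zero
  have hN0 : (N : ℝ) ≠ 0 := by positivity
  refine ⟨(q : ℤ) * k - (p : ℤ) * l, -(i : ℤ), ?_⟩
  field_simp at hk hl ⊢
  push_cast
  linear_combination (p : ℝ) * hl - (q : ℝ) * hk


lemma bwd (N p q : ℕ) (hN : 2 ≤ N) (hp : 0 < p) (hq : 0 < q) (hpq : Nat.Coprime p q)
    (φx φy : ℝ) (a b : ℤ)
    (h : ((q : ℝ) * φx - (p : ℝ) * φy) / π
      = (a : ℝ) + 2 * (b : ℝ) * ((q : ℝ) - (p : ℝ)) / N) :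
    ∃ i ∈ Finset.Icc 1 N, ∃ τ : ℝ,
      Real.sin (2 * π * ((p : ℝ) * τ + (i : ℝ) / N) + φx) = 0 ∧
      Real.sin (2 * π * ((q : ℝ) * τ + (i : ℝ) / N) + φy) = 0 := by
  have hπ : (π : ℝ) ≠ 0 := Real.pi_ne_zero
  have hNpos : 0 < N := by omega
  have hN0 : (N : ℝ) ≠ 0 := by positivity
  have hp0 : (p : ℝ) ≠ 0 := by positivity
  set r : ℤ := b % (N : ℤ) with hr
  have hr0 : 0 ≤ r := Int.emod_nonneg b (by exact_mod_cast hNpos.ne')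
  have hrN : r < (N : ℤ) := Int.emod_lt_of_pos b (by exact_mod_cast hNpos)
  have hrt : (r.toNat : ℤ) = r := Int.toNat_of_nonneg hr0
  have hrtN : r.toNat < N := by omega
  set i : ℕ := N - r.toNat with hi
  have hi1 : 1 ≤ i := by omega
  have hi2 : i ≤ N := by omega
  set m : ℤ := b / (N : ℤ) + 1 with hm
  have hiZ : (i : ℤ) = (N : ℤ) - r.toNat := by
    rw [hi]; push_cast [Nat.cast_sub hrtN.le]; ring
  have hib : (i : ℤ) + b = (N : ℤ) * m := by
    rw [hiZ, hrt, hm, hr]; linear_combination -Int.mul_ediv_add_emod b N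
  have hco : IsCoprime (p : ℤ) (q : ℤ) := by
    rw [Int.isCoprime_iff_gcd_eq_one]
    exact_mod_cast hpq
  obtain ⟨u, v, huv⟩ := hco
  set c : ℤ := a + 2 * ((q : ℤ) - (p : ℤ)) * m with hc
  set k : ℤ := v * c with hk
  set l : ℤ := -(u * c) with hl
  have hkl : (q : ℤ) * k - (p : ℤ) * l = a + 2 * ((q : ℤ) - (p : ℤ)) * m := by
    rw [hk, hl, hc]; linear_combination c * huv
  set τ : ℝ := ((k : ℝ) * π - φx - 2 * π * i / N) / (2 * π * p) with hτ
  have hib' : (i : ℝ) + (b : ℝ) = (N : ℝ) * (m : ℝ) := by exact_mod_cast hib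
  have hkl' : (q : ℝ) * (k : ℝ) - (p : ℝ) * (l : ℝ)
      = (a : ℝ) + 2 * ((q : ℝ) - (p : ℝ)) * (m : ℝ) := by exact_mod_cast hkl
  field_simp at h
  refine ⟨i, Finset.mem_Icc.mpr ⟨hi1, hi2⟩, τ, ?_, ?_⟩
  · rw [Real.sin_eq_zero_iff]
    refine ⟨k, ?_⟩
    rw [hτ]; field_simp; ring
  · rw [Real.sin_eq_zero_iff]
    refine ⟨l, ?_⟩
    have hA : 2 * π * (p:ℝ) * τ * N = ((k:ℝ) * π - φx) * N - 2 * π * i := by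
      rw [hτ]; field_simp
    have key : (p:ℝ) * ((l:ℝ) * π * N)
        = (p:ℝ) * (2 * π * (q:ℝ) * τ * N + 2 * π * i + φy * N) := by
      linear_combination (-(q:ℝ)) * hA + h + 2 * π * ((q:ℝ)-(p:ℝ)) * hib' - π * (N:ℝ) * hkl'
    have key2 := mul_left_cancel₀ hp0 key
    field_simp
    linear_combination key2


/-- For a Type II formation of `N ≥ 2` deputy satellites with coprime positive
frequencies `p, q` and nonzero amplitudes, condition C (no satellite ever passes
through the origin) holds iff `φ₀ = (q·φx - p·φy)/π` cannot be written in the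
form `a + 2b(q - p)/N` with integers `a, b`. -/
theorem typeII_conditionC_iff (N p q : ℕ) (hN : 2 ≤ N) (hp : 0 < p) (hq : 0 < q)
    (hpq : Nat.Coprime p q) (x₀ y₀ φx φy φ₀ : ℝ) (hx₀ : x₀ ≠ 0) (hy₀ : y₀ ≠ 0)
    (hφ₀ : φ₀ = ((q : ℝ) * φx - (p : ℝ) * φy) / π) :
    (∀ i ∈ Finset.Icc 1 N, ∀ τ : ℝ,
        (x₀ * Real.sin (2 * π * ((p : ℝ) * τ + (i : ℝ) / N) + φx),
         y₀ * Real.sin (2 * π * ((q : ℝ) * τ + (i : ℝ) / N) + φy)) ≠ (0, 0)) ↔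
    ¬ ∃ a b : ℤ, φ₀ = (a : ℝ) + 2 * (b : ℝ) * ((q : ℝ) - (p : ℝ)) / N := by
  subst hφ₀
  constructor
  · rintro hC ⟨a, b, hab⟩
    obtain ⟨i, hi, τ, hx, hy⟩ := bwd N p q hN hp hq hpq φx φy a b hab
    exact hC i hi τ (by rw [hx, hy, mul_zero, mul_zero])
  · intro hnot i hi τ heq
    rw [Prod.mk.injEq] at heq
    have hx : Real.sin (2 * π * ((p : ℝ) * τ + (i : ℝ) / N) + φx) = 0 :=
      (mul_eq_zero.mp heq.1).resolve_left hx₀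
    have hy : Real.sin (2 * π * ((q : ℝ) * τ + (i : ℝ) / N) + φy) = 0 :=
      (mul_eq_zero.mp heq.2).resolve_left hy₀
    exact hnot (fwd N p q hN φx φy i τ hx hy)
end

section
/- Let p, q be coprime positive integers, let c₁, c₂ be nonzero reals and φₓ, φ_y reals, and suppose the closed curve γ(τ) = (c₁ cos(2πpτ + φₓ), c₂ cos(2πqτ + φ_y)), τ ∈ [0,1], never equals (0,0). Let θ : [0,1] → ℝ be any continuous function such that γ(τ) = ‖γ(τ)‖ · (cos θ(τ), sin θ(τ)) for all τ ∈ [0,1]. Then: if at least one of p, q is even, θ(1) − θ(0) = 0; if both p and q are odd, θ(1) − θ(0) = 2π or θ(1) − θ(0) = −2π. -/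
/-!
Between two consecutive zeros of the second coordinate the curve stays in one open half-plane
`y > 0` or `y < 0`, so there the argument changes by `0` or `±π`, according to the signs of the
first coordinate at the two zeros. For `q` odd the zeros `t k` of `c₂ cos (2πqτ + φy)` are equally
spaced, the half-planes alternate, and the sign of the first coordinate at `t k` is
`(-1) ^ ((n + k p) / q)` for a fixed integer `n`. Extending `θ` to `ℝ` by
`θ (τ + 1) = θ τ + (θ 1 - θ 0)` and telescoping over one period gives
`θ 1 - θ 0 = -π ∑_{k < 2q} (-1) ^ k (-1) ^ ((n + k p) / q)`. The terms `k` and `k + q` cancel when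
`p` is even. When `p` is odd they agree, and the `k`-th term is `(-1) ^ n (-1) ^ ((n + k p) % q)`,
where `(n + k p) % q` runs over all residues mod `q`, so the sum is `2 (-1) ^ n`. If `q` is even
then `p` is odd, and exchanging the coordinates (`θ ↦ π / 2 - θ`) reduces to the odd case.
-/

open Real Finset Set Function

lemma neg_one_zpow_eq_or (m : ℤ) : (-1 : ℝ) ^ m = 1 ∨ (-1 : ℝ) ^ m = -1 :=
  (Int.even_or_odd m).imp Even.neg_one_zpow Odd.neg_one_zpow

lemma neg_one_zpow_eq_of_even_sub {a b : ℤ} (h : Even (a - b)) : (-1 : ℝ) ^ a = (-1) ^ b := by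
  rw [← Int.cast_negOnePow, ← Int.cast_negOnePow, (Int.negOnePow_eq_iff a b).2 h]

lemma neg_one_zpow_mul_cos_pos {m : ℤ} {x : ℝ} (h₁ : m * π - π / 2 < x) (h₂ : x < m * π + π / 2) :
    0 < (-1 : ℝ) ^ m * cos x := by
  have hsq : (-1 : ℝ) ^ m * (-1) ^ m = 1 := by rw [← mul_zpow]; norm_num
  rw [← sub_add_cancel x (m * π), cos_add_int_mul_pi, ← mul_assoc, hsq, one_mul]
  exact cos_pos_of_mem_Ioo ⟨by linarith, by linarith⟩

lemma neg_one_zpow_mul_sin_pos {m : ℤ} {x : ℝ} (h₁ : m * π < x) (h₂ : x < (m + 1) * π) :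
    0 < (-1 : ℝ) ^ m * sin x := by
  have hsq : (-1 : ℝ) ^ m * (-1) ^ m = 1 := by rw [← mul_zpow]; norm_num
  rw [← sub_add_cancel x (m * π), sin_add_int_mul_pi, ← mul_assoc, hsq, one_mul]
  exact sin_pos_of_pos_of_lt_pi (by linarith) (by linarith)

lemma mem_Ico_floor_div_pi (x : ℝ) : x ∈ Ico (⌊x / π⌋ * π) ((⌊x / π⌋ + 1) * π) :=
  ⟨(le_div_iff₀ pi_pos).1 (Int.floor_le _), (div_lt_iff₀ pi_pos).1 (Int.lt_floor_add_one _)⟩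

lemma neg_one_zpow_floor_mul_cos_pos {x : ℝ} (hx : cos x ≠ 0) :
    0 < (-1 : ℝ) ^ ⌊(x + π / 2) / π⌋ * cos x := by
  obtain ⟨h₁, h₂⟩ := mem_Ico_floor_div_pi (x + π / 2)
  refine neg_one_zpow_mul_cos_pos (lt_of_le_of_ne (by linarith) fun h => hx ?_) (by linarith)
  rw [← h, cos_sub_pi_div_two, sin_int_mul_pi]

lemma Int.floor_add_intCast_div_natCast (β : ℝ) (m : ℤ) {q : ℕ} (hq : q ≠ 0) :
    ⌊β + m / q⌋ = (⌊β * q⌋ + m) / q := by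
  rw [← Int.floor_add_intCast, ← Int.floor_div_natCast]
  congr 1
  field_simp

lemma eq_or_eq_of_sin_eq_zero {m : ℤ} {x : ℝ} (hx : x ∈ Icc (m * π) ((m + 1) * π))
    (h : sin x = 0) : x = m * π ∨ x = (m + 1) * π := by
  obtain ⟨k, rfl⟩ := sin_eq_zero_iff.1 h
  have h₁ : m ≤ k := by exact_mod_cast le_of_mul_le_mul_right hx.1 pi_pos
  have h₂ : k ≤ m + 1 := by exact_mod_cast le_of_mul_le_mul_right hx.2 pi_pos
  obtain rfl | rfl : k = m ∨ k = m + 1 := by omega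
  · exact Or.inl rfl
  · exact Or.inr (by push_cast; ring)

lemma exists_int_mapsTo_Ioo_of_sin_ne_zero {f : ℝ → ℝ} {s : Set ℝ} (hs : IsPreconnected s)
    (hf : ContinuousOn f s) (h : ∀ x ∈ s, sin (f x) ≠ 0) {x₀ : ℝ} (hx₀ : x₀ ∈ s) :
    ∃ m : ℤ, MapsTo f s (Ioo (m * π) ((m + 1) * π)) := by
  have himage : IsPreconnected (f '' s) := hs.image f hf
  have hnot : ∀ k : ℤ, (k : ℝ) * π ∉ f '' s := by
    rintro k ⟨x, hx, hfx⟩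
    exact h x hx (by rw [hfx, sin_int_mul_pi])
  set m := ⌊f x₀ / π⌋
  obtain ⟨hm₁, hm₂⟩ := mem_Ico_floor_div_pi (f x₀)
  refine ⟨m, fun x hx => ⟨?_, ?_⟩⟩
  · by_contra! hle
    exact hnot m (himage.Icc_subset (mem_image_of_mem f hx) (mem_image_of_mem f hx₀) ⟨hle, hm₁⟩)
  · by_contra! hle
    refine hnot (m + 1) (himage.Icc_subset (mem_image_of_mem f hx₀) (mem_image_of_mem f hx) ?_)
    push_cast
    exact ⟨hm₂.le, hle⟩

lemma sub_eq_of_sin_eq_zero {f : ℝ → ℝ} {a b σ : ℝ} (hab : a < b) (hf : ContinuousOn f (Icc a b))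
    (hσ : σ = 1 ∨ σ = -1) (hpos : ∀ τ ∈ Ioo a b, 0 < σ * sin (f τ))
    (ha : sin (f a) = 0) (hb : sin (f b) = 0) :
    f b - f a = σ * (cos (f a) - cos (f b)) * (π / 2) := by
  have hmid : (a + b) / 2 ∈ Ioo a b := ⟨by linarith, by linarith⟩
  obtain ⟨m, hm⟩ := exists_int_mapsTo_Ioo_of_sin_ne_zero isPreconnected_Ioo
    (hf.mono Ioo_subset_Icc_self) (fun τ hτ h => by simpa [h] using hpos τ hτ) hmid
  have hIcc : MapsTo f (Icc a b) (Icc (m * π) ((m + 1) * π)) := by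
    rw [← closure_Ioo hab.ne, ← closure_Ioo (by nlinarith [pi_pos])]
    rw [← closure_Ioo hab.ne] at hf
    exact fun x hx => closure_mono (image_subset_iff.2 hm) (hf.image_closure ⟨x, hx, rfl⟩)
  have hσm : σ * (-1) ^ m = 1 := by
    have h₁ := hpos _ hmid
    have h₂ := neg_one_zpow_mul_sin_pos (hm hmid).1 (hm hmid).2
    rcases hσ with rfl | rfl <;> rcases neg_one_zpow_eq_or m with h | h <;> rw [h] at h₂ ⊢ <;>
      linarith
  have hcos₁ : cos ((m + 1) * π) = -(-1) ^ m := by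
    have h := cos_int_mul_pi (m + 1)
    push_cast at h
    rw [h, zpow_add_one₀ (by norm_num)]; ring
  have hcos : (cos (f a) - cos (f b)) * (π / 2) = (-1) ^ m * (f b - f a) := by
    rcases eq_or_eq_of_sin_eq_zero (hIcc ⟨le_rfl, hab.le⟩) ha with ha' | ha' <;>
      rcases eq_or_eq_of_sin_eq_zero (hIcc ⟨hab.le, le_rfl⟩) hb with hb' | hb' <;>
      rw [ha', hb'] <;> simp only [cos_int_mul_pi, hcos₁] <;> ring
  rw [mul_assoc, hcos, ← mul_assoc, hσm, one_mul]

lemma sub_eq_sum_of_sin_eq_zero {Θ : ℝ → ℝ} (hΘ : Continuous Θ) {t σ : ℕ → ℝ} (ht : StrictMono t)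
    (hσ : ∀ k, σ k = 1 ∨ σ k = -1) (hzero : ∀ k, sin (Θ (t k)) = 0)
    (hpos : ∀ k, ∀ τ ∈ Ioo (t k) (t (k + 1)), 0 < σ k * sin (Θ τ)) (n : ℕ) :
    Θ (t n) - Θ (t 0) =
      ∑ k ∈ range n, σ k * (cos (Θ (t k)) - cos (Θ (t (k + 1)))) * (π / 2) := by
  refine (sum_range_sub (fun k => Θ (t k)) n).symm.trans (sum_congr rfl fun k _ => ?_)
  exact sub_eq_of_sin_eq_zero (ht (lt_add_one k)) hΘ.continuousOn
    (hσ k) (hpos k) (hzero k) (hzero (k + 1))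

lemma sum_range_neg_one_pow_mul_sub {R : Type*} [CommRing R] (s : ℕ → R) (n : ℕ)
    (h : s (2 * n) = s 0) :
    ∑ k ∈ range (2 * n), (-1) ^ k * (s k - s (k + 1)) =
      2 * ∑ k ∈ range (2 * n), (-1) ^ k * s k := by
  have hshift : ∑ k ∈ range (2 * n), (-1) ^ k * s (k + 1) =
      -∑ k ∈ range (2 * n), (-1) ^ k * s k := by
    have h₁ := sum_range_succ' (fun k => (-1 : R) ^ k * s k) (2 * n)
    rw [sum_range_succ, pow_mul, neg_one_sq, one_pow, one_mul, h, pow_zero, one_mul,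
      add_left_inj] at h₁
    rw [h₁, ← sum_neg_distrib]
    exact sum_congr rfl fun k _ => by ring
  simp only [mul_sub, sum_sub_distrib, hshift]
  ring

lemma sub_eq_neg_pi_mul_sum_of_sin_eq_zero {Θ : ℝ → ℝ} (hΘ : Continuous Θ) {t : ℕ → ℝ}
    (ht : StrictMono t) (hzero : ∀ k, sin (Θ (t k)) = 0)
    (hsign : ∀ k, ∀ τ ∈ Ioo (t k) (t (k + 1)), 0 < (-1) ^ (k + 1) * sin (Θ τ)) (n : ℕ)
    (hper : cos (Θ (t (2 * n))) = cos (Θ (t 0))) :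
    Θ (t (2 * n)) - Θ (t 0) = -π * ∑ k ∈ range (2 * n), (-1) ^ k * cos (Θ (t k)) := by
  rw [sub_eq_sum_of_sin_eq_zero hΘ ht (fun k => neg_one_pow_eq_or ℝ (k + 1)) hzero hsign,
    show ∀ S : ℝ, -π * S = -(π / 2) * (2 * S) by intro; ring,
    ← sum_range_neg_one_pow_mul_sub (fun k => cos (Θ (t k))) n hper, mul_sum]
  exact sum_congr rfl fun k _ => by ring

def IsPolarAngle (x y θ : ℝ) : Prop :=
  x = √(x ^ 2 + y ^ 2) * cos θ ∧ y = √(x ^ 2 + y ^ 2) * sin θ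

lemma sqrt_sq_add_sq_ne_zero {x y : ℝ} (h : (x, y) ≠ (0, 0)) : √(x ^ 2 + y ^ 2) ≠ 0 := by
  rw [Ne, Prod.mk.injEq, not_and_or] at h
  rcases h with h | h <;> positivity

namespace IsPolarAngle

variable {x y θ : ℝ}

lemma add_int_mul_two_pi (h : IsPolarAngle x y θ) (k : ℤ) :
    IsPolarAngle x y (θ + k * (2 * π)) := by
  rwa [IsPolarAngle, cos_add_int_mul_two_pi, sin_add_int_mul_two_pi]

lemma swap (h : IsPolarAngle x y θ) : IsPolarAngle y x (π / 2 - θ) := by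
  rw [IsPolarAngle, cos_pi_div_two_sub, sin_pi_div_two_sub, add_comm]
  exact h.symm

lemma mul_cos_pos {s : ℝ} (h : IsPolarAngle x y θ) (hs : 0 < s * x) : 0 < s * cos θ := by
  rw [h.1, mul_left_comm] at hs
  exact pos_of_mul_pos_right hs (sqrt_nonneg _)

lemma mul_sin_pos {s : ℝ} (h : IsPolarAngle x y θ) (hs : 0 < s * y) : 0 < s * sin θ := by
  rw [h.2, mul_left_comm] at hs
  exact pos_of_mul_pos_right hs (sqrt_nonneg _)

lemma sin_eq_zero (h : IsPolarAngle x 0 θ) (hx : x ≠ 0) : sin θ = 0 :=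
  (mul_eq_zero.1 h.2.symm).resolve_left (sqrt_sq_add_sq_ne_zero (by simpa using hx))

lemma cos_eq {ε : ℝ} (h : IsPolarAngle x 0 θ) (hε : ε = 1 ∨ ε = -1) (hx : 0 < ε * x) :
    cos θ = ε := by
  have hc := h.mul_cos_pos hx
  rcases sin_eq_zero_iff_cos_eq.1 (h.sin_eq_zero (right_ne_zero_of_mul hx.ne')) with hc' | hc' <;>
    rcases hε with rfl | rfl <;> linarith

lemma exists_int_sub_eq {θ' : ℝ} (h : IsPolarAngle x y θ) (h' : IsPolarAngle x y θ')
    (hxy : (x, y) ≠ (0, 0)) : ∃ k : ℤ, θ - θ' = 2 * π * k := by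
  have hr := sqrt_sq_add_sq_ne_zero hxy
  refine Real.Angle.angle_eq_iff_two_pi_dvd_sub.1 (Real.Angle.cos_sin_inj ?_ ?_)
  · exact mul_left_cancel₀ hr (h.1.symm.trans h'.1)
  · exact mul_left_cancel₀ hr (h.2.symm.trans h'.2)

end IsPolarAngle

lemma Function.Periodic.map_fract {α : Type*} {f : ℝ → α} (h : Periodic f 1) (x : ℝ) :
    f (Int.fract x) = f x := by
  rw [← Int.self_sub_floor, ← mul_one (⌊x⌋ : ℝ), h.sub_int_mul_eq]

lemma exists_continuous_isPolarAngle {X Y θ : ℝ → ℝ} (hX : Periodic X 1) (hY : Periodic Y 1)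
    (hne : (X 0, Y 0) ≠ (0, 0)) (hθc : ContinuousOn θ (Icc 0 1))
    (hθ : ∀ τ ∈ Icc (0 : ℝ) 1, IsPolarAngle (X τ) (Y τ) (θ τ)) :
    ∃ Θ : ℝ → ℝ, Continuous Θ ∧ (∀ τ, IsPolarAngle (X τ) (Y τ) (Θ τ)) ∧
      ∀ τ, Θ (τ + 1) = Θ τ + (θ 1 - θ 0) := by
  have h₁ : IsPolarAngle (X 0) (Y 0) (θ 1) := by
    simpa only [hX.eq, hY.eq] using hθ 1 (right_mem_Icc.2 zero_le_one)
  obtain ⟨k, hk⟩ := h₁.exists_int_sub_eq (hθ 0 (left_mem_Icc.2 zero_le_one)) hne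
  have hfract : ∀ τ : ℝ, Int.fract τ ∈ Icc (0 : ℝ) 1 :=
    fun τ => ⟨Int.fract_nonneg τ, (Int.fract_lt_one τ).le⟩
  refine ⟨fun τ => θ (Int.fract τ) + ⌊τ⌋ * (θ 1 - θ 0), ?_, fun τ => ?_, fun τ => ?_⟩
  · have hg : Continuous ((fun s => θ s - s * (θ 1 - θ 0)) ∘ Int.fract) :=
      (hθc.sub (continuousOn_id.mul continuousOn_const)).comp_fract''
        (by simp only [Pi.sub_apply, Pi.mul_apply, id]; ring)
    have heq : (fun τ => θ (Int.fract τ) + ⌊τ⌋ * (θ 1 - θ 0)) =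
        fun τ => ((fun s => θ s - s * (θ 1 - θ 0)) ∘ Int.fract) τ + τ * (θ 1 - θ 0) := by
      ext τ
      rw [comp_apply, ← Int.self_sub_fract τ]
      ring
    rw [heq]
    exact hg.add (continuous_id.mul continuous_const)
  · beta_reduce
    rw [← hX.map_fract, ← hY.map_fract, hk,
      show (⌊τ⌋ : ℝ) * (2 * π * k) = (⌊τ⌋ * k : ℤ) * (2 * π) by push_cast; ring]
    exact (hθ _ (hfract τ)).add_int_mul_two_pi _
  · simp only [Int.fract_add_one, Int.floor_add_one]
    push_cast
    ring

noncomputable def cosZero (ω φ : ℝ) (k : ℕ) : ℝ := ((k + 1 / 2) * π - φ) / ω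

section cosZero

variable {ω : ℝ} (φ : ℝ)

lemma mul_cosZero_add (hω : ω ≠ 0) (k : ℕ) : ω * cosZero ω φ k + φ = (k + 1 / 2) * π := by
  rw [cosZero, mul_div_cancel₀ _ hω]
  ring

lemma cos_mul_cosZero_add (hω : ω ≠ 0) (k : ℕ) : cos (ω * cosZero ω φ k + φ) = 0 := by
  rw [mul_cosZero_add φ hω, add_mul, one_div_mul_eq_div, cos_add_pi_div_two, sin_nat_mul_pi,
    neg_zero]

lemma strictMono_cosZero (hω : 0 < ω) : StrictMono (cosZero ω φ) :=
  strictMono_nat_of_lt_succ fun k => by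
    rw [cosZero, cosZero]
    gcongr
    linarith

lemma neg_one_pow_mul_cos_pos_of_mem_Ioo (hω : 0 < ω) {k : ℕ} {τ : ℝ}
    (hτ : τ ∈ Ioo (cosZero ω φ k) (cosZero ω φ (k + 1))) :
    0 < (-1 : ℝ) ^ (k + 1) * cos (ω * τ + φ) := by
  have h₁ := mul_cosZero_add φ hω.ne' k
  have h₂ := mul_cosZero_add φ hω.ne' (k + 1)
  have h₃ := mul_lt_mul_of_pos_left hτ.1 hω
  have h₄ := mul_lt_mul_of_pos_left hτ.2 hω
  push_cast at h₂
  rw [← zpow_natCast]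
  refine neg_one_zpow_mul_cos_pos ?_ ?_ <;> push_cast <;> linarith

lemma cosZero_two_mul {q : ℕ} (hq : q ≠ 0) :
    cosZero (2 * π * q) φ (2 * q) = cosZero (2 * π * q) φ 0 + 1 := by
  have hq₀ : (q : ℝ) ≠ 0 := by exact_mod_cast hq
  simp only [cosZero]
  field_simp
  push_cast
  ring

lemma exists_neg_one_zpow_ediv_mul_cos_pos (p : ℕ) {q : ℕ} (hq : q ≠ 0) (φx : ℝ) :
    ∃ n : ℤ, ∀ k : ℕ, cos (2 * π * p * cosZero (2 * π * q) φ k + φx) ≠ 0 →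
      0 < (-1 : ℝ) ^ ((n + k * p) / q) * cos (2 * π * p * cosZero (2 * π * q) φ k + φx) := by
  set β := (2 * π * p * cosZero (2 * π * q) φ 0 + φx + π / 2) / π
  refine ⟨⌊β * q⌋, fun k hk => ?_⟩
  have hβ : (2 * π * p * cosZero (2 * π * q) φ k + φx + π / 2) / π = β + (k * p : ℤ) / q := by
    simp only [β, cosZero]
    push_cast
    field_simp
    ring
  have h := neg_one_zpow_floor_mul_cos_pos hk
  rwa [hβ, Int.floor_add_intCast_div_natCast β _ hq] at h

end cosZero

lemma ZMod.sum_range_natCast {M : Type*} [AddCommMonoid M] (q : ℕ) [NeZero q] (g : ZMod q → M) :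
    ∑ k ∈ range q, g k = ∑ x : ZMod q, g x :=
  sum_nbij' Nat.cast ZMod.val (by simp) (fun x _ => by simpa using ZMod.val_lt x)
    (fun k hk => ZMod.val_natCast_of_lt (mem_range.1 hk)) (fun x _ => ZMod.natCast_zmod_val x)
    (fun _ _ => rfl)

lemma sum_range_emod_add_mul {M : Type*} [AddCommMonoid M] {p q : ℕ} (hpq : p.Coprime q)
    (n : ℤ) (f : ℤ → M) :
    ∑ k ∈ range q, f ((n + k * p) % q) = ∑ k ∈ range q, f k := by
  rcases eq_zero_or_neZero q with rfl | _
  · simp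
  let u := ZMod.unitOfCoprime p hpq
  let e : ZMod q ≃ ZMod q := (Units.mulRight u).trans (Equiv.addLeft (n : ZMod q))
  have hval : ∀ a : ℤ, a % q = ((a : ZMod q).val : ℤ) := fun a => (ZMod.val_intCast a).symm
  calc ∑ k ∈ range q, f ((n + k * p) % q)
      = ∑ k ∈ range q, f (e k).val := by
        refine sum_congr rfl fun k _ => ?_
        rw [hval]
        simp [e, u]
    _ = ∑ x : ZMod q, f (e x).val := ZMod.sum_range_natCast q (fun x => f (e x).val)
    _ = ∑ x : ZMod q, f x.val := e.sum_comp (fun x => f x.val)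
    _ = ∑ k ∈ range q, f k := by
        rw [← ZMod.sum_range_natCast q (fun x => f x.val)]
        exact sum_congr rfl fun k hk => by rw [ZMod.val_natCast_of_lt (mem_range.1 hk)]

lemma sum_range_neg_one_pow_of_odd {q : ℕ} (hq : Odd q) : ∑ k ∈ range q, (-1 : ℝ) ^ k = 1 := by
  rw [geom_sum_eq (by norm_num), hq.neg_one_pow]; norm_num

lemma sum_range_neg_one_zpow_emod {p q : ℕ} (hq : Odd q) (hpq : p.Coprime q) (n : ℤ) :
    ∑ k ∈ range q, (-1 : ℝ) ^ ((n + k * p) % q) = 1 := by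
  rw [sum_range_emod_add_mul hpq n (fun j => (-1 : ℝ) ^ j)]
  simpa using sum_range_neg_one_pow_of_odd hq

lemma neg_one_pow_mul_neg_one_zpow_ediv {p q : ℕ} (hp : Odd p) (hq : Odd q) (n : ℤ) (k : ℕ) :
    (-1 : ℝ) ^ k * (-1) ^ ((n + k * p) / q) = (-1) ^ n * (-1) ^ ((n + k * p) % q) := by
  rw [← zpow_natCast, ← zpow_add₀ (by norm_num), ← zpow_add₀ (by norm_num)]
  apply neg_one_zpow_eq_of_even_sub
  obtain ⟨a, rfl⟩ := hp
  obtain ⟨b, rfl⟩ := hq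
  have h := Int.mul_ediv_add_emod (n + k * (2 * a + 1 : ℕ)) (2 * b + 1 : ℕ)
  push_cast at h ⊢
  -- `n + k p = q d + r` gives `k + d - (n + r) = 2 (k + a k - b d - r)`
  exact ⟨k + a * k - b * ((n + k * (2 * a + 1)) / (2 * b + 1)) -
    (n + k * (2 * a + 1)) % (2 * b + 1), by linear_combination h⟩

lemma sum_range_two_mul_neg_one_pow_mul_ediv {p q : ℕ} (hq : 0 < q) (n : ℤ) :
    ∑ k ∈ range (2 * q), (-1 : ℝ) ^ k * (-1) ^ ((n + k * p) / q) =
      (1 + (-1) ^ (p + q)) * ∑ k ∈ range q, (-1 : ℝ) ^ k * (-1) ^ ((n + k * p) / q) := by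
  rw [two_mul, sum_range_add, add_mul, one_mul, mul_sum]
  congr 1
  refine sum_congr rfl fun k _ => ?_
  have : (n + ((q + k : ℕ) : ℤ) * p) / q = (n + k * p) / q + p := by
    push_cast
    rw [show n + (q + k) * p = n + k * p + p * q by ring,
      Int.add_mul_ediv_right _ _ (by exact_mod_cast hq.ne')]
  rw [this, zpow_add₀ (by norm_num), zpow_natCast, pow_add, pow_add]
  ring

lemma sum_range_two_mul_neg_one_pow_mul_ediv_of_even {p q : ℕ} (hp : Even p) (hq : Odd q)
    (n : ℤ) : ∑ k ∈ range (2 * q), (-1 : ℝ) ^ k * (-1) ^ ((n + k * p) / q) = 0 := by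
  rw [sum_range_two_mul_neg_one_pow_mul_ediv hq.pos, (hp.add_odd hq).neg_one_pow]
  ring

lemma sum_range_two_mul_neg_one_pow_mul_ediv_of_odd {p q : ℕ} (hp : Odd p) (hq : Odd q)
    (hpq : p.Coprime q) (n : ℤ) :
    ∑ k ∈ range (2 * q), (-1 : ℝ) ^ k * (-1) ^ ((n + k * p) / q) = 2 * (-1) ^ n := by
  rw [sum_range_two_mul_neg_one_pow_mul_ediv hq.pos, (hp.add_odd hq).neg_one_pow,
    sum_congr rfl fun k _ => neg_one_pow_mul_neg_one_zpow_ediv hp hq n k, ← mul_sum,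
    sum_range_neg_one_zpow_emod hq hpq n]
  ring

lemma exists_pos_mul_cos_add_eq {c : ℝ} (hc : c ≠ 0) (φ : ℝ) :
    ∃ c' φ', 0 < c' ∧ ∀ x, c * cos (x + φ) = c' * cos (x + φ') := by
  rcases hc.lt_or_gt with hc | hc
  · exact ⟨-c, φ + π, neg_pos.2 hc, fun x => by rw [← add_assoc, cos_add_pi]; ring⟩
  · exact ⟨c, φ, hc, fun _ => rfl⟩

lemma periodic_mul_cos (c φ : ℝ) (m : ℕ) : Periodic (fun τ => c * cos (2 * π * m * τ + φ)) 1 :=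
  fun τ => by
    beta_reduce
    rw [show 2 * π * m * (τ + 1) + φ = 2 * π * m * τ + φ + (m : ℤ) * (2 * π) by push_cast; ring,
      cos_add_int_mul_two_pi]

theorem lissajous_winding_of_odd_of_pos {p q : ℕ} (hq : Odd q) (hpq : p.Coprime q)
    {c₁ c₂ φx φy Δ : ℝ} (hc₁ : 0 < c₁) (hc₂ : 0 < c₂) {Θ : ℝ → ℝ} (hΘ : Continuous Θ)
    (hpolar : ∀ τ, IsPolarAngle (c₁ * cos (2 * π * p * τ + φx))
      (c₂ * cos (2 * π * q * τ + φy)) (Θ τ))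
    (hne : ∀ τ, (c₁ * cos (2 * π * p * τ + φx), c₂ * cos (2 * π * q * τ + φy)) ≠ (0, 0))
    (hshift : ∀ τ, Θ (τ + 1) = Θ τ + Δ) :
    (Even p → Δ = 0) ∧ (Odd p → Δ = 2 * π ∨ Δ = -(2 * π)) := by
  have hω : 0 < 2 * π * q := by have := hq.pos; positivity
  set t := cosZero (2 * π * q) φy
  have hYt : ∀ k, c₂ * cos (2 * π * q * t k + φy) = 0 := fun k => by
    rw [cos_mul_cosZero_add φy hω.ne', mul_zero]
  have hXt : ∀ k, cos (2 * π * p * t k + φx) ≠ 0 :=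
    fun k h => hne (t k) (by rw [h, hYt k, mul_zero])
  have hpolar₀ : ∀ k, IsPolarAngle (c₁ * cos (2 * π * p * t k + φx)) 0 (Θ (t k)) :=
    fun k => hYt k ▸ hpolar (t k)
  have hzero : ∀ k, sin (Θ (t k)) = 0 :=
    fun k => (hpolar₀ k).sin_eq_zero (mul_ne_zero hc₁.ne' (hXt k))
  have hsign : ∀ k, ∀ τ ∈ Ioo (t k) (t (k + 1)), 0 < (-1) ^ (k + 1) * sin (Θ τ) :=
    fun k τ hτ => (hpolar τ).mul_sin_pos (by
      rw [mul_left_comm]; exact mul_pos hc₂ (neg_one_pow_mul_cos_pos_of_mem_Ioo φy hω hτ))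
  obtain ⟨n, hn⟩ := exists_neg_one_zpow_ediv_mul_cos_pos φy p hq.pos.ne' φx
  have hcos : ∀ k, cos (Θ (t k)) = (-1) ^ ((n + k * p) / q) := fun k =>
    (hpolar₀ k).cos_eq (neg_one_zpow_eq_or _) (by
      rw [mul_left_comm]; exact mul_pos hc₁ (hn k (hXt k)))
  have hper : cos (Θ (t (2 * q))) = cos (Θ (t 0)) := by
    rw [hcos, hcos]
    push_cast
    rw [show n + 2 * q * p = n + 2 * p * q by ring,
      Int.add_mul_ediv_right _ _ (by exact_mod_cast hq.pos.ne'), zpow_add₀ (by norm_num),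
      (even_two_mul _).neg_one_zpow, mul_one, zero_mul, add_zero]
  have ht : t (2 * q) = t 0 + 1 := cosZero_two_mul φy hq.pos.ne'
  have hΔ : Δ = -π * ∑ k ∈ range (2 * q), (-1) ^ k * cos (Θ (t k)) := by
    rw [← sub_eq_neg_pi_mul_sum_of_sin_eq_zero (t := t) hΘ (strictMono_cosZero φy hω) hzero hsign
      q hper, ht, hshift]
    ring
  simp only [hcos] at hΔ
  refine ⟨fun hp => ?_, fun hp => ?_⟩
  · rw [hΔ, sum_range_two_mul_neg_one_pow_mul_ediv_of_even hp hq, mul_zero]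
  · rw [hΔ, sum_range_two_mul_neg_one_pow_mul_ediv_of_odd hp hq hpq]
    rcases neg_one_zpow_eq_or n with h | h <;> rw [h]
    · exact Or.inr (by ring)
    · exact Or.inl (by ring)

theorem lissajous_winding_of_odd {p q : ℕ} (hq : Odd q) (hpq : p.Coprime q) {c₁ c₂ φx φy : ℝ}
    (hc₁ : c₁ ≠ 0) (hc₂ : c₂ ≠ 0)
    (hne : ∀ τ ∈ Icc (0 : ℝ) 1,
      (c₁ * cos (2 * π * p * τ + φx), c₂ * cos (2 * π * q * τ + φy)) ≠ (0, 0))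
    {θ : ℝ → ℝ} (hθc : ContinuousOn θ (Icc 0 1))
    (hθ : ∀ τ ∈ Icc (0 : ℝ) 1, IsPolarAngle (c₁ * cos (2 * π * p * τ + φx))
      (c₂ * cos (2 * π * q * τ + φy)) (θ τ)) :
    (Even p → θ 1 - θ 0 = 0) ∧ (Odd p → θ 1 - θ 0 = 2 * π ∨ θ 1 - θ 0 = -(2 * π)) := by
  obtain ⟨c₁', φx', hc₁', h₁⟩ := exists_pos_mul_cos_add_eq hc₁ φx
  obtain ⟨c₂', φy', hc₂', h₂⟩ := exists_pos_mul_cos_add_eq hc₂ φy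
  simp only [h₁, h₂] at hne hθ
  have hX := periodic_mul_cos c₁' φx' p
  have hY := periodic_mul_cos c₂' φy' q
  obtain ⟨Θ, hΘc, hΘ, hshift⟩ :=
    exists_continuous_isPolarAngle hX hY (hne 0 (left_mem_Icc.2 zero_le_one)) hθc hθ
  refine lissajous_winding_of_odd_of_pos hq hpq hc₁' hc₂' hΘc hΘ (fun τ => ?_) hshift
  rw [← hX.map_fract, ← hY.map_fract]
  exact hne _ ⟨Int.fract_nonneg τ, (Int.fract_lt_one τ).le⟩

theorem lissajous_winding_general (p q : ℕ)
    (hpq : Nat.Coprime p q) (c₁ c₂ φx φy : ℝ) (hc₁ : c₁ ≠ 0) (hc₂ : c₂ ≠ 0)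
    (hne : ∀ τ ∈ Set.Icc (0 : ℝ) 1,
        (c₁ * Real.cos (2 * π * p * τ + φx),
         c₂ * Real.cos (2 * π * q * τ + φy)) ≠ (0, 0))
    (θ : ℝ → ℝ) (hθcont : ContinuousOn θ (Set.Icc 0 1))
    (hθ : ∀ τ ∈ Set.Icc (0 : ℝ) 1,
        c₁ * Real.cos (2 * π * p * τ + φx) =
          Real.sqrt ((c₁ * Real.cos (2 * π * p * τ + φx)) ^ 2 +
            (c₂ * Real.cos (2 * π * q * τ + φy)) ^ 2) * Real.cos (θ τ) ∧
        c₂ * Real.cos (2 * π * q * τ + φy) =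
          Real.sqrt ((c₁ * Real.cos (2 * π * p * τ + φx)) ^ 2 +
            (c₂ * Real.cos (2 * π * q * τ + φy)) ^ 2) * Real.sin (θ τ)) :
    ((Even p ∨ Even q) → θ 1 - θ 0 = 0) ∧
    (Odd p → Odd q → (θ 1 - θ 0 = 2 * π ∨ θ 1 - θ 0 = -(2 * π))) := by
  rcases Nat.even_or_odd q with hqe | hqo
  · have hpo : Odd p := Nat.coprime_two_right.1 (hpq.coprime_dvd_right hqe.two_dvd)
    have hswap := (lissajous_winding_of_odd hpo hpq.symm hc₂ hc₁
      (fun τ hτ => by simpa [and_comm] using hne τ hτ) (continuousOn_const.sub hθcont)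
      (fun τ hτ => IsPolarAngle.swap (hθ τ hτ))).1 hqe
    simp only [Pi.sub_apply] at hswap
    exact ⟨fun _ => by linarith, fun _ hqo => absurd hqe (Nat.not_even_iff_odd.2 hqo)⟩
  · obtain ⟨heven, hodd⟩ := lissajous_winding_of_odd hqo hpq hc₁ hc₂ hne hθcont hθ
    exact ⟨fun h => heven (h.resolve_right (Nat.not_even_iff_odd.2 hqo)), fun hp _ => hodd hp⟩

/-- Winding number of the relative-position curve
`γ(τ) = (c₁ cos(2πpτ + φx), c₂ cos(2πqτ + φy))` about the origin: given any
continuous argument function `θ` for `γ` on `[0,1]`, if at least one of the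
coprime positive frequencies `p, q` is even then `θ(1) - θ(0) = 0`, and if
both are odd then `θ(1) - θ(0) = ±2π`. -/
theorem lissajous_winding (p q : ℕ) (hp : 0 < p) (hq : 0 < q)
    (hpq : Nat.Coprime p q) (c₁ c₂ φx φy : ℝ) (hc₁ : c₁ ≠ 0) (hc₂ : c₂ ≠ 0)
    (hne : ∀ τ ∈ Set.Icc (0 : ℝ) 1,
        (c₁ * Real.cos (2 * π * p * τ + φx),
         c₂ * Real.cos (2 * π * q * τ + φy)) ≠ (0, 0))
    (θ : ℝ → ℝ) (hθcont : ContinuousOn θ (Set.Icc 0 1))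
    (hθ : ∀ τ ∈ Set.Icc (0 : ℝ) 1,
        c₁ * Real.cos (2 * π * p * τ + φx) =
          Real.sqrt ((c₁ * Real.cos (2 * π * p * τ + φx)) ^ 2 +
            (c₂ * Real.cos (2 * π * q * τ + φy)) ^ 2) * Real.cos (θ τ) ∧
        c₂ * Real.cos (2 * π * q * τ + φy) =
          Real.sqrt ((c₁ * Real.cos (2 * π * p * τ + φx)) ^ 2 +
            (c₂ * Real.cos (2 * π * q * τ + φy)) ^ 2) * Real.sin (θ τ)) :
    ((Even p ∨ Even q) → θ 1 - θ 0 = 0) ∧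
    (Odd p → Odd q → (θ 1 - θ 0 = 2 * π ∨ θ 1 - θ 0 = -(2 * π))) :=
  lissajous_winding_general p q hpq c₁ c₂ φx φy hc₁ hc₂ hne θ hθcont hθ
end

section
/- Let p, q be coprime positive integers, both odd, and let φ ∈ ℝ be such that cos(πps/q + φ) ≠ 0 for all integers s with 1 ≤ s ≤ 2q. Then ∑_{s=1}^{2q} (−1)^s · sign(cos(πps/q + φ)) equals 2 or −2. -/
open Real Finset

/-!
Since `sign (cos θ) = (-1) ^ ⌊θ / π + 1 / 2⌋` and `p` is odd, the `s`-th summand is `g (p * s)` with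
`g j = (-1) ^ j * (-1) ^ ⌊j / q + c⌋`, `c = φ / π + 1 / 2`. Shifting `j` by `q` flips both signs
(`q` is odd), so `g` has period `q`; the sum is therefore twice `∑_{s < q} g (p * s)`, which equals
`∑_{j < q} g j` because multiplication by `p` permutes the residues mod `q`. For `j < q` the floor
`⌊j / q + c⌋` increases at most once, so this last sum is an alternating sum of odd length of a
`±1` sequence with at most one sign change, hence `±1`.
-/

namespace Function.Periodic

variable {M : Type*} [AddCommMonoid M] {g : ℕ → M} {q : ℕ}

theorem sum_Ico_add_eq_sum_range (hg : Periodic g q) (n : ℕ) :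
    ∑ s ∈ Ico n (n + q), g s = ∑ s ∈ range q, g s := by
  have hmod : (Multiset.Ico n (n + q)).map (fun s => g (s % q)) = (Multiset.range q).map g := by
    rw [← Nat.multiset_Ico_map_mod, Multiset.map_map]
    rfl
  simp only [hg.map_mod_nat] at hmod
  exact congrArg Multiset.sum hmod

theorem sum_Ico_add_mul_eq_nsmul (hg : Periodic g q) (n k : ℕ) :
    ∑ s ∈ Ico n (n + k * q), g s = k • ∑ s ∈ range q, g s := by
  induction k with
  | zero => simp
  | succ k ih =>
    rw [← sum_Ico_consecutive _ (Nat.le_add_right n (k * q)) (by nlinarith), ih,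
      show n + (k + 1) * q = n + k * q + q by ring, hg.sum_Ico_add_eq_sum_range, succ_nsmul]

theorem sum_range_comp_mul (hg : Periodic g q) {p : ℕ} (hpq : p.Coprime q) :
    ∑ s ∈ range q, g (p * s) = ∑ s ∈ range q, g s := by
  rcases q.eq_zero_or_pos with rfl | hq
  · simp
  rw [← Fin.sum_univ_eq_sum_range (fun s => g (p * s)), ← Fin.sum_univ_eq_sum_range]
  let σ : Fin q → Fin q := fun i => ⟨p * i % q, Nat.mod_lt _ hq⟩
  have hσ : σ.Injective := fun i j hij => Fin.ext <| by
    have hmod : p * i ≡ p * j [MOD q] := Fin.mk.inj_iff.mp hij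
    simpa [Nat.ModEq, Nat.mod_eq_of_lt i.2, Nat.mod_eq_of_lt j.2] using
      Nat.ModEq.cancel_left_of_coprime (Nat.coprime_comm.mp hpq) hmod
  exact Fintype.sum_bijective σ (Finite.injective_iff_bijective.mp hσ) _ _
    fun i => (hg.map_mod_nat _).symm

end Function.Periodic

theorem sum_range_neg_one_pow_mul_ite_le {R : Type*} [Ring R] {n : ℕ} (hn : Odd n) (J : ℕ) :
    ∑ j ∈ range n, (-1 : R) ^ j * (if J ≤ j then -1 else 1) = 1 ∨
    ∑ j ∈ range n, (-1 : R) ^ j * (if J ≤ j then -1 else 1) = -1 := by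
  rcases le_or_gt n J with hnJ | hJn
  · left
    rw [sum_congr rfl fun j hj => by
        rw [if_neg (not_le.mpr ((mem_range.mp hj).trans_le hnJ)), mul_one],
      neg_one_geom_sum, if_neg (Nat.not_even_iff_odd.mpr hn)]
  · have hlow : ∑ j ∈ range J, (-1 : R) ^ j * (if J ≤ j then -1 else 1) =
        ∑ j ∈ range J, (-1 : R) ^ j :=
      sum_congr rfl fun j hj => by rw [if_neg (not_le.mpr (mem_range.mp hj)), mul_one]
    have hhigh : ∑ j ∈ Ico J n, (-1 : R) ^ j * (if J ≤ j then -1 else 1) =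
        -∑ j ∈ Ico J n, (-1 : R) ^ j := by
      rw [← sum_neg_distrib]
      exact sum_congr rfl fun j hj => by rw [if_pos (mem_Ico.mp hj).1, mul_neg_one]
    rw [← sum_range_add_sum_Ico _ hJn.le, hlow, hhigh, sum_Ico_eq_sub _ hJn.le, neg_one_geom_sum,
      neg_one_geom_sum, if_neg (Nat.not_even_iff_odd.mpr hn)]
    split_ifs <;> simp

noncomputable def squareWave (x : ℝ) : ℝ := (-1) ^ ⌊x⌋

theorem squareWave_add_intCast (x : ℝ) (n : ℤ) : squareWave (x + n) = (-1) ^ n * squareWave x := by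
  rw [squareWave, squareWave, Int.floor_add_intCast, zpow_add₀ (by norm_num), mul_comm]

theorem Real.sign_cos_eq_squareWave {θ : ℝ} (h : cos θ ≠ 0) :
    Real.sign (cos θ) = squareWave (θ / π + 1 / 2) := by
  set n := ⌊θ / π + 1 / 2⌋ with hn
  have hθ : θ = (θ - n * π) + n * π := by ring
  have hmem : θ - n * π ∈ Set.Ico (-(π / 2)) (π / 2) := by
    have h1 := Int.floor_le (θ / π + 1 / 2)
    have h2 := Int.lt_floor_add_one (θ / π + 1 / 2)
    rw [← hn, div_add' _ _ _ pi_ne_zero, le_div_iff₀ pi_pos] at h1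
    rw [← hn, div_add' _ _ _ pi_ne_zero, div_lt_iff₀ pi_pos] at h2
    constructor <;> linarith
  have hpos : 0 < cos (θ - n * π) := by
    refine (cos_nonneg_of_mem_Icc (Set.Ico_subset_Icc_self hmem)).lt_of_ne fun h0 => h ?_
    rw [hθ, cos_add_int_mul_pi, ← h0, mul_zero]
  rw [squareWave, ← hn, hθ, cos_add_int_mul_pi]
  rcases Int.even_or_odd n with he | ho
  · rw [he.neg_one_zpow, one_mul, sign_of_pos hpos]
  · rw [ho.neg_one_zpow, neg_one_mul, sign_of_neg (neg_neg_of_pos hpos)]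

theorem periodic_neg_one_pow_mul_squareWave {q : ℕ} (hq : Odd q) (c : ℝ) :
    Function.Periodic (fun j : ℕ => (-1 : ℝ) ^ j * squareWave (j / q + c)) q := by
  intro j
  have hq0 : (q : ℝ) ≠ 0 := Nat.cast_ne_zero.mpr hq.pos.ne'
  have harg : ((j + q : ℕ) : ℝ) / q + c = (j / q + c) + ((1 : ℤ) : ℝ) := by
    push_cast; field_simp; ring
  simp only [harg, squareWave_add_intCast, pow_add, hq.neg_one_pow, zpow_one]
  ring

theorem sum_range_neg_one_pow_mul_squareWave {q : ℕ} (hq : Odd q) (c : ℝ) :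
    ∑ j ∈ range q, (-1 : ℝ) ^ j * squareWave (j / q + c) = 1 ∨
    ∑ j ∈ range q, (-1 : ℝ) ^ j * squareWave (j / q + c) = -1 := by
  have hq0 : (0 : ℝ) < q := Nat.cast_pos.mpr hq.pos
  set k := ⌊c⌋
  -- `J` is the first index with `k + 1 ≤ j / q + c`.
  set J := ⌈q * (k + 1 - c)⌉₊
  have hstep : ∀ j ∈ range q,
      squareWave (j / q + c) = (-1) ^ k * if J ≤ j then -1 else 1 := by
    intro j hj
    have hjq : (j : ℝ) / q < 1 := (div_lt_one hq0).mpr (Nat.cast_lt.mpr (mem_range.mp hj))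
    have hJ : J ≤ j ↔ (k : ℝ) + 1 ≤ j / q + c := by
      rw [Nat.ceil_le, ← sub_le_iff_le_add, le_div_iff₀ hq0, mul_comm]
    have hk := Int.floor_le c
    have hk' := Int.lt_floor_add_one c
    split_ifs with h
    · have hfloor : ⌊(j : ℝ) / q + c⌋ = k + 1 :=
        Int.floor_eq_iff.mpr ⟨by push_cast; exact hJ.mp h, by push_cast; linarith⟩
      rw [squareWave, hfloor, zpow_add_one₀ (by norm_num), mul_neg_one]
    · have hfloor : ⌊(j : ℝ) / q + c⌋ = k :=
        Int.floor_eq_iff.mpr ⟨by linarith [div_nonneg j.cast_nonneg hq0.le], by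
          rw [hJ] at h; linarith⟩
      rw [squareWave, hfloor, mul_one]
  rw [sum_congr rfl fun j hj => by rw [hstep j hj, mul_left_comm], ← mul_sum]
  rcases Int.even_or_odd k with hk | hk <;>
    rcases sum_range_neg_one_pow_mul_ite_le (R := ℝ) hq J with h | h <;>
    rw [h, hk.neg_one_zpow] <;> norm_num

theorem winding_sum_odd_general (p q : ℕ)
    (hpq : Nat.Coprime p q) (hpodd : Odd p) (hqodd : Odd q) (φ : ℝ)
    (hcos : ∀ s ∈ Finset.Icc 1 (2 * q),
        Real.cos (π * (p : ℝ) * (s : ℝ) / (q : ℝ) + φ) ≠ 0) :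
    (∑ s ∈ Finset.Icc 1 (2 * q),
        (-1 : ℝ) ^ s * Real.sign (Real.cos (π * (p : ℝ) * (s : ℝ) / (q : ℝ) + φ)))
      = 2 ∨
    (∑ s ∈ Finset.Icc 1 (2 * q),
        (-1 : ℝ) ^ s * Real.sign (Real.cos (π * (p : ℝ) * (s : ℝ) / (q : ℝ) + φ)))
      = -2 := by
  set g : ℕ → ℝ := fun j => (-1) ^ j * squareWave (j / q + (φ / π + 1 / 2))
  have hg : Function.Periodic g q := periodic_neg_one_pow_mul_squareWave hqodd _
  have hgp : Function.Periodic (fun s => g (p * s)) q := fun s => by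
    simpa only [mul_add, Nat.cast_id] using hg.nat_mul p (p * s)
  have hterm : ∀ s ∈ Icc 1 (2 * q),
      (-1 : ℝ) ^ s * Real.sign (cos (π * p * s / q + φ)) = g (p * s) := by
    intro s hs
    have harg : (π * p * s / q + φ) / π + 1 / 2 = ((p * s : ℕ) : ℝ) / q + (φ / π + 1 / 2) := by
      push_cast; field_simp; ring
    rw [Real.sign_cos_eq_squareWave (hcos s hs), harg]
    simp only [g, pow_mul, hpodd.neg_one_pow]
  rw [sum_congr rfl hterm, ← Ico_add_one_right_eq_Icc, add_comm, hgp.sum_Ico_add_mul_eq_nsmul,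
    hg.sum_range_comp_mul hpq]
  rcases sum_range_neg_one_pow_mul_squareWave hqodd (φ / π + 1 / 2) with h | h <;>
    simp only [g, h, nsmul_eq_mul] <;> norm_num

/-- For coprime positive odd integers `p, q` and a phase `φ` such that
`cos(πps/q + φ) ≠ 0` for `s = 1, …, 2q`, the signed sum
`∑_{s=1}^{2q} (-1)^s sign(cos(πps/q + φ))` equals `2` or `-2`. -/
theorem winding_sum_odd (p q : ℕ) (hp : 0 < p) (hq : 0 < q)
    (hpq : Nat.Coprime p q) (hpodd : Odd p) (hqodd : Odd q) (φ : ℝ)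
    (hcos : ∀ s ∈ Finset.Icc 1 (2 * q),
        Real.cos (π * (p : ℝ) * (s : ℝ) / (q : ℝ) + φ) ≠ 0) :
    (∑ s ∈ Finset.Icc 1 (2 * q),
        (-1 : ℝ) ^ s * Real.sign (Real.cos (π * (p : ℝ) * (s : ℝ) / (q : ℝ) + φ)))
      = 2 ∨
    (∑ s ∈ Finset.Icc 1 (2 * q),
        (-1 : ℝ) ^ s * Real.sign (Real.cos (π * (p : ℝ) * (s : ℝ) / (q : ℝ) + φ)))
      = -2 :=
  winding_sum_odd_general p q hpq hpodd hqodd φ hcos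
end

section
/- Let p, q be coprime positive integers with q even, and let φ ∈ ℝ be such that cos(πps/q + φ) ≠ 0 for all integers s with 1 ≤ s ≤ 2q. Then ∑_{s=1}^{2q} (−1)^s · sign(cos(πps/q + φ)) = 0. -/
open Real Finset

/-- For coprime positive integers `p, q` with `q` even and a phase `φ` such that
`cos(πps/q + φ) ≠ 0` for `s = 1, …, 2q`, the signed sum
`∑_{s=1}^{2q} (-1)^s sign(cos(πps/q + φ))` vanishes. -/
theorem winding_sum_even (p q : ℕ) (hp : 0 < p) (hq : 0 < q)
    (hpq : Nat.Coprime p q) (hqeven : Even q) (φ : ℝ)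
    (hcos : ∀ s ∈ Finset.Icc 1 (2 * q),
        Real.cos (π * (p : ℝ) * (s : ℝ) / (q : ℝ) + φ) ≠ 0) :
    ∑ s ∈ Finset.Icc 1 (2 * q),
        (-1 : ℝ) ^ s * Real.sign (Real.cos (π * (p : ℝ) * (s : ℝ) / (q : ℝ) + φ))
      = 0 := by
  obtain ⟨k, hk⟩ : Odd p := by
    rcases Nat.even_or_odd p with h | h
    · exfalso
      have h2 : 2 ∣ Nat.gcd p q := Nat.dvd_gcd h.two_dvd hqeven.two_dvd
      rw [hpq] at h2; omega
    · exact h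
  have hq0 : (q : ℝ) ≠ 0 := Nat.cast_ne_zero.mpr hq.ne'
  have hp' : (p : ℝ) = 2 * (k : ℝ) + 1 := by exact_mod_cast congrArg (Nat.cast : ℕ → ℝ) hk
  set f : ℕ → ℝ := fun s =>
    (-1 : ℝ) ^ s * Real.sign (Real.cos (π * (p : ℝ) * (s : ℝ) / (q : ℝ) + φ)) with hf
  have key : ∀ s : ℕ, f (q + s) = - f s := by
    intro s
    have harg : π * (p : ℝ) * ((q + s : ℕ) : ℝ) / (q : ℝ) + φ
        = (π * (p : ℝ) * (s : ℝ) / (q : ℝ) + φ + π) + (k : ℝ) * (2 * π) := by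
      push_cast
      rw [hp']
      field_simp
      ring
    have hcosval : Real.cos (π * (p : ℝ) * ((q + s : ℕ) : ℝ) / (q : ℝ) + φ)
        = - Real.cos (π * (p : ℝ) * (s : ℝ) / (q : ℝ) + φ) := by
      rw [harg, Real.cos_add_nat_mul_two_pi, Real.cos_add_pi]
    have hpow : (-1 : ℝ) ^ (q + s) = (-1 : ℝ) ^ s := by
      rw [pow_add, hqeven.neg_one_pow, one_mul]
    simp only [hf, hcosval, hpow, Real.sign_neg]
    ring
  have h1 : Finset.Icc 1 (2 * q) = Finset.Ioc 0 (2 * q) := Finset.Icc_add_one_left_eq_Ioc 0 (2 * q)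
  rw [h1, show 2 * q = q + q from two_mul q,
    ← Finset.sum_Ioc_consecutive f (Nat.zero_le q) (Nat.le_add_left q q)]
  have h2 : Finset.Ioc q (q + q) = (Finset.Ioc 0 q).map (addLeftEmbedding q) := by
    rw [Finset.map_add_left_Ioc, add_zero]
  rw [h2, Finset.sum_map]
  simp only [addLeftEmbedding_apply]
  rw [← Finset.sum_add_distrib]
  apply Finset.sum_eq_zero
  intro i _
  rw [key i]
  ring
end

section
/- Let N ≥ 2 be an integer and let p, q be coprime positive odd integers, each coprime to N. Define f_s = sin(πps/N) · sin(πqs/N) for integers s. Then there exist s, s' ∈ {1, …, N−1} with f_s > 0 and f_{s'} < 0 if and only if neither q − p nor q + p is divisible by 2N. -/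
/-!
If `2N ∣ q ∓ p` then `sin (πqs/N) = ± sin (πps/N)`, so `f_s = ± sin² (πps/N)` has a single
sign. Conversely, by product-to-sum `2 f_s = cos (π(q-p)s/N) - cos (π(q+p)s/N)`, and when `2N`
divides neither `q - p` nor `q + p` both cosines sum to zero over a full period `0 ≤ s < 2N`
(they are real parts of geometric sums of nontrivial `2N`-th roots of unity). Since `p` and `q`
are odd, `f_{s+N} = f_s`, so `f` also sums to zero over `1 ≤ s ≤ N - 1`; there it never vanishes
because `p` and `q` are prime to `N`, so it takes both signs.
-/

open Real Finset

theorem Finset.exists_pos_and_neg_of_sum_eq_zero {ι M : Type*} [AddCommGroup M] [LinearOrder M]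
    [IsOrderedAddMonoid M] {s : Finset ι} {f : ι → M} (hs : s.Nonempty)
    (hf : ∀ i ∈ s, f i ≠ 0) (h : ∑ i ∈ s, f i = 0) : (∃ i ∈ s, 0 < f i) ∧ ∃ i ∈ s, f i < 0 := by
  obtain ⟨i, hi⟩ := hs
  refine ⟨exists_pos_of_sum_zero_of_exists_nonzero f h ⟨i, hi, hf i hi⟩, ?_⟩
  obtain ⟨j, hj, hpos⟩ := exists_pos_of_sum_zero_of_exists_nonzero (-f)
    (by simp [sum_neg_distrib, h]) ⟨i, hi, by simpa using hf i hi⟩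
  exact ⟨j, hj, by simpa using hpos⟩

theorem sum_range_cos_two_pi_mul_div_eq_zero {n : ℕ} {m : ℤ} (hm : ¬ (n : ℤ) ∣ m) :
    ∑ s ∈ range n, cos (2 * π * m * s / n) = 0 := by
  obtain rfl | hn := eq_or_ne n 0
  · simp
  have hζ := Complex.isPrimitiveRoot_exp n hn
  set z := Complex.exp (2 * π * Complex.I / n) ^ m with hz
  have hz1 : z ≠ 1 := by rwa [Ne, hζ.zpow_eq_one_iff_dvd]
  have hzn : z ^ n = 1 := by
    rw [← zpow_natCast, ← zpow_mul, hζ.zpow_eq_one_iff_dvd]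
    exact dvd_mul_left _ _
  have hre (s : ℕ) : (z ^ s).re = cos (2 * π * m * s / n) := by
    rw [hz, ← Complex.exp_int_mul, ← Complex.exp_nat_mul, ← Complex.exp_ofReal_mul_I_re]
    congr 2
    push_cast
    ring
  calc ∑ s ∈ range n, cos (2 * π * m * s / n) = (∑ s ∈ range n, z ^ s).re := by
        simp only [Complex.re_sum, hre]
    _ = 0 := by rw [geom_sum_eq hz1, hzn, sub_self, zero_div, Complex.zero_re]

theorem sum_range_two_mul_cos_pi_mul_div_eq_zero {N : ℕ} {m : ℤ} (hm : ¬ 2 * (N : ℤ) ∣ m) :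
    ∑ s ∈ range (2 * N), cos (π * m * s / N) = 0 := by
  have := sum_range_cos_two_pi_mul_div_eq_zero (n := 2 * N) (m := m) (by exact_mod_cast hm)
  simpa only [Nat.cast_mul, Nat.cast_ofNat, mul_assoc, mul_div_mul_left _ _ (two_ne_zero' ℝ)]
    using this

theorem sin_pi_mul_div_eq_of_dvd_sub {N : ℕ} {a b : ℤ} (h : 2 * (N : ℤ) ∣ a - b) (s : ℕ) :
    sin (π * a * s / N) = sin (π * b * s / N) := by
  obtain rfl | hN := eq_or_ne N 0
  · simp
  obtain ⟨k, hk⟩ := h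
  have : π * a * s / N = π * b * s / N + (k * s : ℤ) * (2 * π) := by
    rw [sub_eq_iff_eq_add'.mp hk]
    push_cast
    field_simp
  rw [this, sin_add_int_mul_two_pi]

theorem sin_pi_mul_div_ne_zero {N r s : ℕ} (hr : r.Coprime N) (hs : 0 < s) (hsN : s < N) :
    sin (π * r * s / N) ≠ 0 := by
  rw [Ne, sin_eq_zero_iff]
  rintro ⟨k, hk⟩
  have hN : (N : ℝ) ≠ 0 := Nat.cast_ne_zero.mpr (by omega)
  have hdvd : (N : ℤ) ∣ (r * s : ℕ) := ⟨k, by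
    field_simp at hk
    exact_mod_cast (by linarith : (r * s : ℝ) = N * k)⟩
  have hNs : N ∣ s := hr.symm.dvd_of_dvd_mul_left (Int.natCast_dvd_natCast.mp hdvd)
  exact absurd (Nat.le_of_dvd hs hNs) (by omega)

theorem sin_pi_mul_add_div_of_odd {N r : ℕ} (hN : N ≠ 0) (hr : Odd r) (s : ℕ) :
    sin (π * r * (N + s) / N) = -sin (π * r * s / N) := by
  have : π * r * (N + s) / N = π * r * s / N + r * π := by field_simp; ring
  rw [this, sin_add_nat_mul_pi, hr.neg_one_pow, neg_one_mul]

-- `f_s` in the informal statement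
noncomputable def sinProd (N p q s : ℕ) : ℝ := sin (π * p * s / N) * sin (π * q * s / N)

section

variable {N p q : ℕ}

theorem two_mul_sinProd (s : ℕ) :
    2 * sinProd N p q s =
      cos (π * ((q - p : ℤ) : ℝ) * s / N) - cos (π * ((q + p : ℤ) : ℝ) * s / N) := by
  rw [sinProd, mul_comm (sin _), ← mul_assoc, two_mul_sin_mul_sin]
  push_cast
  ring_nf

theorem sum_range_two_mul_sinProd_eq_zero (hsub : ¬ 2 * (N : ℤ) ∣ q - p)
    (hadd : ¬ 2 * (N : ℤ) ∣ q + p) : ∑ s ∈ range (2 * N), sinProd N p q s = 0 := by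
  have h : ∑ s ∈ range (2 * N), 2 * sinProd N p q s = 0 := by
    simp only [two_mul_sinProd, sum_sub_distrib, sum_range_two_mul_cos_pi_mul_div_eq_zero hsub,
      sum_range_two_mul_cos_pi_mul_div_eq_zero hadd, sub_zero]
  rw [← mul_sum] at h
  exact (mul_eq_zero.mp h).resolve_left two_ne_zero

theorem sinProd_add_self (hp : Odd p) (hq : Odd q) (s : ℕ) :
    sinProd N p q (N + s) = sinProd N p q s := by
  obtain rfl | hN := eq_or_ne N 0
  · simp
  simp only [sinProd, Nat.cast_add, sin_pi_mul_add_div_of_odd hN hp,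
    sin_pi_mul_add_div_of_odd hN hq, neg_mul_neg]

theorem sum_range_sinProd_eq_zero (hp : Odd p) (hq : Odd q) (hsub : ¬ 2 * (N : ℤ) ∣ q - p)
    (hadd : ¬ 2 * (N : ℤ) ∣ q + p) : ∑ s ∈ range N, sinProd N p q s = 0 := by
  have h := sum_range_two_mul_sinProd_eq_zero hsub hadd
  rw [two_mul, sum_range_add] at h
  simp only [sinProd_add_self hp hq] at h
  linarith

theorem sum_Icc_sinProd_eq_zero (hp : Odd p) (hq : Odd q) (hsub : ¬ 2 * (N : ℤ) ∣ q - p)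
    (hadd : ¬ 2 * (N : ℤ) ∣ q + p) : ∑ s ∈ Icc 1 (N - 1), sinProd N p q s = 0 := by
  have h := sum_range_sinProd_eq_zero hp hq hsub hadd
  obtain rfl | hN := eq_or_ne N 0
  · simp
  rwa [sum_range_eq_add_Ico _ (Nat.pos_of_ne_zero hN), sinProd, Nat.cast_zero, mul_zero, zero_div,
    sin_zero, zero_mul, zero_add, ← Icc_sub_one_right_eq_Ico_of_not_isMin (by simpa using hN)]
    at h

theorem sinProd_ne_zero (hpN : p.Coprime N) (hqN : q.Coprime N) {s : ℕ}
    (hs : s ∈ Icc 1 (N - 1)) : sinProd N p q s ≠ 0 := by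
  rw [mem_Icc] at hs
  exact mul_ne_zero (sin_pi_mul_div_ne_zero hpN (by omega) (by omega))
    (sin_pi_mul_div_ne_zero hqN (by omega) (by omega))

theorem sinProd_nonneg_of_dvd_sub (h : 2 * (N : ℤ) ∣ q - p) (s : ℕ) :
    0 ≤ sinProd N p q s := by
  have := sin_pi_mul_div_eq_of_dvd_sub h s
  push_cast at this
  rw [sinProd, this]
  exact mul_self_nonneg _

theorem sinProd_nonpos_of_dvd_add (h : 2 * (N : ℤ) ∣ q + p) (s : ℕ) :
    sinProd N p q s ≤ 0 := by
  have := sin_pi_mul_div_eq_of_dvd_sub (b := -p) (by rwa [sub_neg_eq_add]) s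
  push_cast at this
  rw [sinProd, this, mul_neg, neg_mul, neg_div, sin_neg, mul_neg, neg_nonpos]
  exact mul_self_nonneg _

end

theorem f_s_both_signs_iff_general (N p q : ℕ) (hN : 2 ≤ N)
    (hpodd : Odd p) (hqodd : Odd q)
    (hpN : Nat.Coprime p N) (hqN : Nat.Coprime q N) :
    ((∃ s ∈ Finset.Icc 1 (N - 1),
        0 < Real.sin (π * (p : ℝ) * (s : ℝ) / (N : ℝ)) *
            Real.sin (π * (q : ℝ) * (s : ℝ) / (N : ℝ))) ∧
     (∃ s' ∈ Finset.Icc 1 (N - 1),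
        Real.sin (π * (p : ℝ) * (s' : ℝ) / (N : ℝ)) *
            Real.sin (π * (q : ℝ) * (s' : ℝ) / (N : ℝ)) < 0)) ↔
    (¬ ((2 * (N : ℤ)) ∣ ((q : ℤ) - (p : ℤ))) ∧
     ¬ ((2 * (N : ℤ)) ∣ ((q : ℤ) + (p : ℤ)))) := by
  change ((∃ s ∈ Icc 1 (N - 1), 0 < sinProd N p q s) ∧
    ∃ s' ∈ Icc 1 (N - 1), sinProd N p q s' < 0) ↔ _
  constructor
  · rintro ⟨⟨s, -, hpos⟩, s', -, hneg⟩
    exact ⟨fun h => (sinProd_nonneg_of_dvd_sub h s').not_gt hneg,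
      fun h => (sinProd_nonpos_of_dvd_add h s).not_gt hpos⟩
  · rintro ⟨hsub, hadd⟩
    exact exists_pos_and_neg_of_sum_eq_zero ⟨1, mem_Icc.mpr ⟨le_rfl, by omega⟩⟩
      (fun s hs => sinProd_ne_zero hpN hqN hs) (sum_Icc_sinProd_eq_zero hpodd hqodd hsub hadd)

/-- Let `N ≥ 2` and let `p, q` be coprime positive odd integers, each coprime to
`N`, and set `f s = sin(πps/N)·sin(πqs/N)`. Then `f` takes both a positive value
and a negative value on `{1, …, N-1}` iff neither `q - p` nor `q + p` is
divisible by `2N`. -/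
theorem f_s_both_signs_iff (N p q : ℕ) (hN : 2 ≤ N) (hp : 0 < p) (hq : 0 < q)
    (hpq : Nat.Coprime p q) (hpodd : Odd p) (hqodd : Odd q)
    (hpN : Nat.Coprime p N) (hqN : Nat.Coprime q N) :
    ((∃ s ∈ Finset.Icc 1 (N - 1),
        0 < Real.sin (π * (p : ℝ) * (s : ℝ) / (N : ℝ)) *
            Real.sin (π * (q : ℝ) * (s : ℝ) / (N : ℝ))) ∧
     (∃ s' ∈ Finset.Icc 1 (N - 1),
        Real.sin (π * (p : ℝ) * (s' : ℝ) / (N : ℝ)) *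
            Real.sin (π * (q : ℝ) * (s' : ℝ) / (N : ℝ)) < 0)) ↔
    (¬ ((2 * (N : ℤ)) ∣ ((q : ℤ) - (p : ℤ))) ∧
     ¬ ((2 * (N : ℤ)) ∣ ((q : ℤ) + (p : ℤ)))) :=
  f_s_both_signs_iff_general N p q hN hpodd hqodd hpN hqN
end

section
/- Let N ≥ 2, let p, q be coprime positive integers such that N divides none of the numbers 2p, 2q, q − p, q + p, and let x₀, y₀, φₓ, φ_y be reals. For the Type I formation x_k(τ) = x₀ sin(2πp(τ + k/N) + φₓ), y_k(τ) = y₀ sin(2πq(τ + k/N) + φ_y), k = 1, …, N, the following hold identically in τ ∈ ℝ: ∑_{k=1}^N x_k'(τ)·x_k(τ) = 0, ∑_{k=1}^N y_k'(τ)·y_k(τ) = 0, and ∑_{k=1}^N x_k'(τ)·y_k(τ) = 0, where ' denotes the derivative with respect to τ. -/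
/-!
Product-to-sum turns each of the three summands into sinusoids `sin (2π m (τ + k/N) + c)` with
`m ∈ {2p, 2q, q + p, q - p}`. Summed over `k`, such a sinusoid is the imaginary part of
`exp (i (2π m τ + c)) * ∑ ζ^k` for the `N`-th root of unity `ζ = exp (2π i m / N)`, and the
geometric sum vanishes because `ζ ≠ 1` exactly when `N ∤ m`.
-/

open Real Finset
open scoped Complex

theorem Complex.exp_two_pi_mul_I_mul_int_div_eq_one_iff {N : ℕ} (hN : N ≠ 0) (m : ℤ) :
    cexp (2 * π * Complex.I * m / N) = 1 ↔ (N : ℤ) ∣ m := by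
  rw [Complex.exp_eq_one_iff]
  conv in _ = _ =>
    rw [← mul_comm (2 * π * Complex.I), mul_div_assoc, mul_right_inj' Complex.two_pi_I_ne_zero]
  field_simp [Nat.cast_ne_zero.mpr hN]
  norm_cast

theorem sum_Icc_one_pow_eq_zero {K : Type*} [DivisionRing K] {ζ : K} {N : ℕ}
    (hζN : ζ ^ N = 1) (hζ : ζ ≠ 1) : ∑ k ∈ Icc 1 N, ζ ^ k = 0 := by
  rw [← Ico_add_one_right_eq_Icc, geom_sum_Ico hζ (by omega), pow_succ, hζN, one_mul, pow_one,
    sub_self, zero_div]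

theorem sum_Icc_sin_two_pi_mul_add_div_eq_zero {N : ℕ} {m : ℤ} (hm : ¬ (N : ℤ) ∣ m)
    (τ φ : ℝ) : ∑ k ∈ Icc 1 N, sin (2 * π * m * (τ + k / N) + φ) = 0 := by
  rcases eq_or_ne N 0 with rfl | hN
  · simp
  set ζ := cexp (2 * π * Complex.I * m / N)
  have hζN : ζ ^ N = 1 := by
    rw [← Complex.exp_nat_mul, ← Complex.exp_int_mul_two_pi_mul_I m]
    congr 1
    field_simp
  have hζ : ζ ≠ 1 := mt (Complex.exp_two_pi_mul_I_mul_int_div_eq_one_iff hN m).1 hm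
  have hterm (k : ℕ) : cexp ((2 * π * m * (τ + k / N) + φ : ℝ) * Complex.I)
      = cexp ((2 * π * m * τ + φ : ℝ) * Complex.I) * ζ ^ k := by
    rw [← Complex.exp_nat_mul, ← Complex.exp_add]
    congr 1
    push_cast
    ring
  calc ∑ k ∈ Icc 1 N, sin (2 * π * m * (τ + k / N) + φ)
      = (∑ k ∈ Icc 1 N, cexp ((2 * π * m * (τ + k / N) + φ : ℝ) * Complex.I)).im := by
        simp only [Complex.im_sum, Complex.exp_ofReal_mul_I_im]
    _ = 0 := by
        simp only [hterm, ← mul_sum, sum_Icc_one_pow_eq_zero hζN hζ, mul_zero, Complex.zero_im]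

theorem deriv_const_mul_sin_mul_add (A ω c φ τ : ℝ) :
    deriv (fun t ↦ A * sin (ω * (t + c) + φ)) τ = A * ω * cos (ω * (τ + c) + φ) := by
  have hθ : HasDerivAt (fun t ↦ ω * (t + c) + φ) ω τ := by
    simpa using (((hasDerivAt_id τ).add_const c).const_mul ω).add_const φ
  have hd : HasDerivAt (fun t ↦ A * sin (ω * (t + c) + φ)) (A * (cos (ω * (τ + c) + φ) * ω)) τ :=
    ((hasDerivAt_sin _).comp τ hθ).const_mul A
  rw [hd.deriv]
  ring

theorem cos_mul_sin (x y : ℝ) : cos x * sin y = (sin (y + x) + sin (y - x)) / 2 := by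
  rw [sin_add, sin_sub]
  ring

theorem sum_Icc_cos_mul_sin_self_eq_zero {N : ℕ} {a : ℤ} (ha : ¬ (N : ℤ) ∣ 2 * a) (τ φ : ℝ) :
    ∑ k ∈ Icc 1 N, cos (2 * π * a * (τ + k / N) + φ) * sin (2 * π * a * (τ + k / N) + φ)
      = 0 := by
  calc _ = ∑ k ∈ Icc 1 N, sin (2 * π * ↑(2 * a) * (τ + k / N) + 2 * φ) / 2 := by
        refine sum_congr rfl fun k _ ↦ ?_
        rw [show 2 * π * ↑(2 * a) * (τ + k / N) + 2 * φ
            = 2 * (2 * π * a * (τ + k / N) + φ) by push_cast; ring, sin_two_mul]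
        ring
    _ = 0 := by rw [← sum_div, sum_Icc_sin_two_pi_mul_add_div_eq_zero ha, zero_div]

theorem sum_Icc_cos_mul_sin_eq_zero {N : ℕ} {a b : ℤ} (hadd : ¬ (N : ℤ) ∣ b + a)
    (hsub : ¬ (N : ℤ) ∣ b - a) (τ φ ψ : ℝ) :
    ∑ k ∈ Icc 1 N, cos (2 * π * a * (τ + k / N) + φ) * sin (2 * π * b * (τ + k / N) + ψ)
      = 0 := by
  calc _ = ∑ k ∈ Icc 1 N, (sin (2 * π * ↑(b + a) * (τ + k / N) + (ψ + φ))
          + sin (2 * π * ↑(b - a) * (τ + k / N) + (ψ - φ))) / 2 := by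
        refine sum_congr rfl fun k _ ↦ ?_
        rw [cos_mul_sin]
        congr 3 <;> push_cast <;> ring
    _ = 0 := by
        rw [← sum_div, sum_add_distrib, sum_Icc_sin_two_pi_mul_add_div_eq_zero hadd,
          sum_Icc_sin_two_pi_mul_add_div_eq_zero hsub, add_zero, zero_div]

theorem typeI_second_order_cancellation_general (N p q : ℕ)
    (h2p : ¬ (N ∣ 2 * p)) (h2q : ¬ (N ∣ 2 * q))
    (hqp : ¬ ((N : ℤ) ∣ ((q : ℤ) - (p : ℤ)))) (hqp' : ¬ (N ∣ (q + p)))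
    (x₀ y₀ φx φy : ℝ) :
    ∀ τ : ℝ,
      (∑ k ∈ Finset.Icc 1 N,
        deriv (fun t : ℝ => x₀ * Real.sin (2 * π * p * (t + (k : ℝ) / N) + φx)) τ *
          (x₀ * Real.sin (2 * π * p * (τ + (k : ℝ) / N) + φx)) = 0) ∧
      (∑ k ∈ Finset.Icc 1 N,
        deriv (fun t : ℝ => y₀ * Real.sin (2 * π * q * (t + (k : ℝ) / N) + φy)) τ *
          (y₀ * Real.sin (2 * π * q * (τ + (k : ℝ) / N) + φy)) = 0) ∧
      (∑ k ∈ Finset.Icc 1 N,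
        deriv (fun t : ℝ => x₀ * Real.sin (2 * π * p * (t + (k : ℝ) / N) + φx)) τ *
          (y₀ * Real.sin (2 * π * q * (τ + (k : ℝ) / N) + φy)) = 0) := by
  intro τ
  have scale (A B : ℝ) {f g : ℕ → ℝ} (h : ∑ k ∈ Icc 1 N, f k * g k = 0) :
      ∑ k ∈ Icc 1 N, A * f k * (B * g k) = 0 := by
    simp_rw [mul_mul_mul_comm A, ← mul_sum, h, mul_zero]
  have hxx := sum_Icc_cos_mul_sin_self_eq_zero (a := p) (by exact_mod_cast h2p) τ φx
  have hyy := sum_Icc_cos_mul_sin_self_eq_zero (a := q) (by exact_mod_cast h2q) τ φy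
  have hxy := sum_Icc_cos_mul_sin_eq_zero (by exact_mod_cast hqp') hqp τ φx φy
  push_cast at hxx hyy hxy
  simp only [deriv_const_mul_sin_mul_add]
  exact ⟨scale _ _ hxx, scale _ _ hyy, scale _ _ hxy⟩

/-- For a Type I formation of `N ≥ 2` deputy satellites with coprime positive
frequencies `p, q` such that `N` divides none of `2p`, `2q`, `q - p`, `q + p`,
the quadratic sums `∑ xₖ'xₖ`, `∑ yₖ'yₖ`, `∑ xₖ'yₖ` vanish identically, so the
second-order corrections to the main satellite's motion cancel. -/
theorem typeI_second_order_cancellation (N p q : ℕ) (hN : 2 ≤ N)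
    (hp : 0 < p) (hq : 0 < q) (hpq : Nat.Coprime p q)
    (h2p : ¬ (N ∣ 2 * p)) (h2q : ¬ (N ∣ 2 * q))
    (hqp : ¬ ((N : ℤ) ∣ ((q : ℤ) - (p : ℤ)))) (hqp' : ¬ (N ∣ (q + p)))
    (x₀ y₀ φx φy : ℝ) :
    ∀ τ : ℝ,
      (∑ k ∈ Finset.Icc 1 N,
        deriv (fun t : ℝ => x₀ * Real.sin (2 * π * p * (t + (k : ℝ) / N) + φx)) τ *
          (x₀ * Real.sin (2 * π * p * (τ + (k : ℝ) / N) + φx)) = 0) ∧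
      (∑ k ∈ Finset.Icc 1 N,
        deriv (fun t : ℝ => y₀ * Real.sin (2 * π * q * (t + (k : ℝ) / N) + φy)) τ *
          (y₀ * Real.sin (2 * π * q * (τ + (k : ℝ) / N) + φy)) = 0) ∧
      (∑ k ∈ Finset.Icc 1 N,
        deriv (fun t : ℝ => x₀ * Real.sin (2 * π * p * (t + (k : ℝ) / N) + φx)) τ *
          (y₀ * Real.sin (2 * π * q * (τ + (k : ℝ) / N) + φy)) = 0) :=
  typeI_second_order_cancellation_general N p q h2p h2q hqp hqp' x₀ y₀ φx φy
end

section
/- Let ω₀ > 0, m_r > 0, k > 0, and b ≥ 0 be reals, and let A be the real 4×4 matrix with rows (0, 1, 0, 0), (−3ω₀², 0, 0, 2ω₀), (0, 0, 0, 1), (0, −2ω₀, 3ω₀² − k/m_r, −b/m_r). Then every complex eigenvalue ρ of A satisfies Re ρ < 0 if and only if b > 0 and k > 3ω₀²·m_r. -/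
/-!
Write `a = b / m_r`, `u = k / m_r` and `p` for the characteristic polynomial. At a root `ρ`, the
vector `(2ωρ, ρ² + 3ω²)` lies in the kernel of the 2×2 matrix polynomial whose determinant is `p`,
and pairing the equations with its conjugate is the energy balance of the damped gyroscopic
system: with `Z = ρ² + 3ω²`,
`Re (conj ρ · conj Z · p ρ) = Re ρ · (positive if u > 3ω²) + a |ρ|² |Z|²`.
Since `ρ ≠ 0` and `Z ≠ 0` at a root, `a > 0` then forces `Re ρ < 0`. Conversely, if `u ≤ 3ω²`
then `p 0 = 3ω²(u - 3ω²) ≤ 0` and `p` has a nonnegative real root, and if `a = 0` then `p` is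
even, so `ρ` and `-ρ` are both roots.
-/

open Matrix Polynomial ComplexConjugate

def IsHurwitzStable (p : ℝ[X]) : Prop := ∀ ρ : ℂ, aeval ρ p = 0 → ρ.re < 0

/-- `det [[λ² + 3w², -2wλ], [2wλ, λ² + aλ + u - 3w²]]`, from the in-plane equations in
second-order form. -/
noncomputable def inPlaneCharpoly (w a u : ℝ) : ℝ[X] :=
  (X ^ 2 + C (3 * w ^ 2)) * (X ^ 2 + C a * X + C (u - 3 * w ^ 2)) + C (4 * w ^ 2) * X ^ 2

section
variable (w a u : ℝ)

lemma degree_inPlaneCharpoly : (inPlaneCharpoly w a u).degree = 4 := by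
  unfold inPlaneCharpoly
  compute_degree!

lemma eval_inPlaneCharpoly (t : ℝ) : (inPlaneCharpoly w a u).eval t =
    (t ^ 2 + 3 * w ^ 2) * (t ^ 2 + a * t + (u - 3 * w ^ 2)) + 4 * w ^ 2 * t ^ 2 := by
  simp [inPlaneCharpoly]

lemma aeval_inPlaneCharpoly (ρ : ℂ) : aeval ρ (inPlaneCharpoly w a u) =
    (ρ ^ 2 + 3 * w ^ 2) * (ρ ^ 2 + a * ρ + (u - 3 * w ^ 2)) + 4 * w ^ 2 * ρ ^ 2 := by
  simp [inPlaneCharpoly]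

lemma charpoly_eq_inPlaneCharpoly :
    (!![0, 1, 0, 0;
        -3 * w ^ 2, 0, 0, 2 * w;
        0, 0, 0, 1;
        0, -2 * w, 3 * w ^ 2 - u, -a] : Matrix (Fin 4) (Fin 4) ℝ).charpoly
      = inPlaneCharpoly w a u := by
  simp [Matrix.charpoly, det_succ_row_zero, Fin.sum_univ_succ, charmatrix_apply, diagonal_apply,
    Fin.succAbove, inPlaneCharpoly, map_ofNat]
  ring

lemma re_conj_mul_aeval_inPlaneCharpoly (ρ : ℂ) :
    (conj ρ * conj (ρ ^ 2 + 3 * w ^ 2) * aeval ρ (inPlaneCharpoly w a u)).re =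
      ρ.re * (Complex.normSq ρ * (4 * w ^ 2 * Complex.normSq ρ + Complex.normSq (ρ ^ 2 + 3 * w ^ 2))
        + 12 * w ^ 4 * Complex.normSq ρ + (u - 3 * w ^ 2) * Complex.normSq (ρ ^ 2 + 3 * w ^ 2))
      + a * Complex.normSq ρ * Complex.normSq (ρ ^ 2 + 3 * w ^ 2) := by
  rw [aeval_inPlaneCharpoly]
  simp [Complex.normSq_apply, pow_two]
  ring

variable {w a u}

lemma re_neg_of_aeval_inPlaneCharpoly_eq_zero (hw : w ≠ 0) (ha : 0 < a) (hu : 3 * w ^ 2 < u)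
    {ρ : ℂ} (hρ : aeval ρ (inPlaneCharpoly w a u) = 0) : ρ.re < 0 := by
  have hρ0 : ρ ≠ 0 := by
    rintro rfl
    rw [aeval_inPlaneCharpoly] at hρ
    have : 0 < 3 * w ^ 2 * (u - 3 * w ^ 2) := mul_pos (by positivity) (sub_pos.2 hu)
    exact this.ne' (Complex.ofReal_injective (by push_cast; linear_combination hρ))
  have hZ : ρ ^ 2 + 3 * w ^ 2 ≠ 0 := by
    intro hZ
    rw [aeval_inPlaneCharpoly, hZ, zero_mul, zero_add] at hρ
    simp [hw, hρ0] at hρ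
  have hbalance := re_conj_mul_aeval_inPlaneCharpoly w a u ρ
  rw [hρ, mul_zero, Complex.zero_re] at hbalance
  have hN : 0 < Complex.normSq ρ := Complex.normSq_pos.2 hρ0
  have hNZ : 0 < Complex.normSq (ρ ^ 2 + 3 * w ^ 2) := Complex.normSq_pos.2 hZ
  have hu' : 0 ≤ u - 3 * w ^ 2 := by linarith
  by_contra! hre
  have hdissipation : 0 < a * Complex.normSq ρ * Complex.normSq (ρ ^ 2 + 3 * w ^ 2) := by
    positivity
  have hstored : 0 ≤ ρ.re * (Complex.normSq ρ * (4 * w ^ 2 * Complex.normSq ρ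
      + Complex.normSq (ρ ^ 2 + 3 * w ^ 2)) + 12 * w ^ 4 * Complex.normSq ρ
      + (u - 3 * w ^ 2) * Complex.normSq (ρ ^ 2 + 3 * w ^ 2)) := by
    positivity
  linarith

lemma exists_nonneg_root_inPlaneCharpoly (ha : 0 ≤ a) (hu : u ≤ 3 * w ^ 2) :
    ∃ t : ℝ, 0 ≤ t ∧ (inPlaneCharpoly w a u).eval t = 0 := by
  -- `T ^ 2 ≥ 3 * w ^ 2 - u`, so every factor of `p T` is nonnegative.
  set T := 3 * w ^ 2 - u + 1
  have hT : 0 ≤ T := by linarith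
  have h0 : (inPlaneCharpoly w a u).eval 0 ≤ 0 := by
    rw [eval_inPlaneCharpoly]
    nlinarith [sq_nonneg w]
  have hTeval : 0 ≤ (inPlaneCharpoly w a u).eval T := by
    rw [eval_inPlaneCharpoly]
    have : 0 ≤ T ^ 2 + a * T + (u - 3 * w ^ 2) := by nlinarith
    positivity
  obtain ⟨t, ⟨ht, -⟩, hroot⟩ :=
    intermediate_value_Icc hT (Polynomial.continuousOn _) ⟨h0, hTeval⟩
  exact ⟨t, ht, hroot⟩

lemma exists_root_re_nonneg_inPlaneCharpoly_zero :
    ∃ ρ : ℂ, 0 ≤ ρ.re ∧ aeval ρ (inPlaneCharpoly w 0 u) = 0 := by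
  obtain ⟨ρ, hρ⟩ := IsAlgClosed.exists_aeval_eq_zero ℂ (inPlaneCharpoly w 0 u)
    (by rw [degree_inPlaneCharpoly]; decide)
  have hneg : aeval (-ρ) (inPlaneCharpoly w 0 u) = 0 := by
    rw [aeval_inPlaneCharpoly] at hρ ⊢
    push_cast at hρ ⊢
    linear_combination hρ
  rcases le_total 0 ρ.re with h | h
  · exact ⟨ρ, h, hρ⟩
  · exact ⟨-ρ, by simpa using h, hneg⟩

lemma isHurwitzStable_inPlaneCharpoly_iff (hw : w ≠ 0) (ha : 0 ≤ a) :
    IsHurwitzStable (inPlaneCharpoly w a u) ↔ 0 < a ∧ 3 * w ^ 2 < u := by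
  refine ⟨fun h => ⟨?_, ?_⟩, fun ⟨hapos, hu⟩ _ =>
    re_neg_of_aeval_inPlaneCharpoly_eq_zero hw hapos hu⟩
  · refine ha.lt_of_ne fun ha0 => ?_
    subst ha0
    obtain ⟨ρ, hre, hρ⟩ := exists_root_re_nonneg_inPlaneCharpoly_zero (w := w) (u := u)
    exact (h ρ hρ).not_ge hre
  · by_contra! hu
    obtain ⟨t, ht, hroot⟩ := exists_nonneg_root_inPlaneCharpoly ha hu
    have hroot' : aeval (t : ℂ) (inPlaneCharpoly w a u) = 0 := by
      rw [← Complex.coe_algebraMap, aeval_algebraMap_apply_eq_algebraMap_eval, hroot, map_zero]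
    exact (h t hroot').not_ge ht

end

theorem com_relative_motion_stability_general (ω₀ mr k b : ℝ)
    (hω₀ : 0 < ω₀) (hmr : 0 < mr) (hb : 0 ≤ b) :
    (∀ ρ : ℂ,
        (Polynomial.aeval ρ)
          (Matrix.charpoly
            (!![0, 1, 0, 0;
                -3 * ω₀ ^ 2, 0, 0, 2 * ω₀;
                0, 0, 0, 1;
                0, -2 * ω₀, 3 * ω₀ ^ 2 - k / mr, -b / mr] :
              Matrix (Fin 4) (Fin 4) ℝ)) = 0 → ρ.re < 0) ↔
    (0 < b ∧ 3 * ω₀ ^ 2 * mr < k) := by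
  rw [neg_div, charpoly_eq_inPlaneCharpoly]
  refine (isHurwitzStable_inPlaneCharpoly_iff hω₀.ne' (by positivity)).trans ?_
  rw [div_pos_iff_of_pos_right hmr, lt_div_iff₀ hmr]

/-- Routh–Hurwitz analysis of the linearized in-plane dynamics of the relative
motion between the main satellite and the deputy satellites' center of mass:
all complex eigenvalues (roots of the characteristic polynomial) of the matrix
`A` lie in the open left half-plane iff `b > 0` and `k > 3ω₀²·m_r`. -/
theorem com_relative_motion_stability (ω₀ mr k b : ℝ)
    (hω₀ : 0 < ω₀) (hmr : 0 < mr) (hk : 0 < k) (hb : 0 ≤ b) :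
    (∀ ρ : ℂ,
        (Polynomial.aeval ρ)
          (Matrix.charpoly
            (!![0, 1, 0, 0;
                -3 * ω₀ ^ 2, 0, 0, 2 * ω₀;
                0, 0, 0, 1;
                0, -2 * ω₀, 3 * ω₀ ^ 2 - k / mr, -b / mr] :
              Matrix (Fin 4) (Fin 4) ℝ)) = 0 → ρ.re < 0) ↔
    (0 < b ∧ 3 * ω₀ ^ 2 * mr < k) :=
  com_relative_motion_stability_general ω₀ mr k b hω₀ hmr hb
end

section
/- Let ω₀ > 0, m_D > 0, m_C > 0, k > 0, b ≥ 0 be reals and N a positive integer; set m_r = m_C·m_D/(N·m_D + m_C), and let A₁ be the real 4×4 matrix with rows (0, 1, 0, 0), (−3ω₀²·m_r/m_D, 0, 0, 2ω₀), (0, 0, 0, 1), (0, −2ω₀, 3ω₀² − k/m_D, −b/m_D). Then every complex eigenvalue ρ of A₁ satisfies Re ρ < 0 if and only if b > 0 and k > 3ω₀²·m_D. -/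
open Matrix Polynomial

/-!
Writing `A₁` as the second-order system `x'' + α x − 2ω₀ z' = 0`,
`z'' + a z' + K z + 2ω₀ x' = 0` with `α = 3ω₀²m_r/m_D`, `a = b/m_D`, `K = k/m_D − 3ω₀²`, its
characteristic polynomial is `(ρ² + α)(ρ² + aρ + K) + 4ω₀²ρ²`. For `α, K > 0` the energy
`½(|x'|² + |z'|² + α|x|² + K|z|²)` of the mode `(x, z) = (2ω₀ρ, ρ² + α)·e^{ρt}` is only dissipated
through `a|z'|²`, and the gyroscopic coupling does no work; so an eigenvalue with `Re ρ ≥ 0` forces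
`a|ρ|²|ρ² + α|² = 0`, which is impossible when `a > 0`. Conversely, for `K ≤ 0` the intermediate
value theorem gives a nonnegative real eigenvalue, and for `a = 0` a purely imaginary one.
-/

def gyroQuartic (α K a w : ℝ) (ρ : ℂ) : ℂ :=
  (ρ ^ 2 + α) * (ρ ^ 2 + a * ρ + K) + 4 * w ^ 2 * ρ ^ 2

theorem aeval_charpoly_gyroMatrix (α K a w : ℝ) (ρ : ℂ) :
    aeval ρ (!![0, 1, 0, 0; -α, 0, 0, 2 * w; 0, 0, 0, 1; 0, -2 * w, -K, -a] :
      Matrix (Fin 4) (Fin 4) ℝ).charpoly = gyroQuartic α K a w ρ := by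
  rw [← eval_map_algebraMap, ← charpoly_map, eval_charpoly, det_succ_row_zero]
  simp only [Nat.succ_eq_add_one, Nat.reduceAdd, scalar_apply, neg_mul, Complex.coe_algebraMap,
    Fin.isValue, Matrix.sub_apply, map_apply, of_apply, cons_val', cons_val_fin_one, cons_val_zero,
    det_fin_three, submatrix_apply, Fin.succ_zero_eq_one, Fin.succAbove, Fin.castSucc_zero,
    cons_val_one, Fin.succ_one_eq_two, Fin.castSucc_one, cons_val, Fin.reduceSucc,
    Fin.reduceCastSucc, Fin.sum_univ_succ, Fin.coe_ofNat_eq_mod, Nat.zero_mod, pow_zero,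
    diagonal_apply_eq, Complex.ofReal_zero, sub_zero, one_mul, lt_self_iff_false, ↓reduceIte,
    not_lt_zero, Complex.ofReal_neg, sub_neg_eq_add, ne_eq, Fin.reduceEq, not_false_eq_true,
    diagonal_apply_ne, Complex.ofReal_one, zero_sub, mul_neg, mul_one, zero_add, sub_self,
    mul_zero, zero_mul, neg_zero, Complex.ofReal_mul, Complex.ofReal_ofNat, add_zero, Fin.val_succ,
    cons_val_succ, Fin.succ_pos, one_ne_zero, pow_one, zero_ne_one, neg_neg, Fin.lt_one_iff,
    even_two, Even.neg_pow, one_pow, Fin.reduceLT, Finset.univ_unique, Fin.default_eq_zero,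
    Fin.val_eq_zero, Finset.sum_singleton, gyroQuartic]
  ring

open ComplexConjugate in
theorem re_conj_mul_gyroQuartic (α K a w : ℝ) (ρ : ℂ) :
    (conj (ρ * (ρ ^ 2 + α)) * gyroQuartic α K a w ρ).re =
      ρ.re * (Complex.normSq ρ * (4 * w ^ 2 * Complex.normSq ρ + Complex.normSq (ρ ^ 2 + α))
        + 4 * α * w ^ 2 * Complex.normSq ρ + K * Complex.normSq (ρ ^ 2 + α))
      + a * Complex.normSq ρ * Complex.normSq (ρ ^ 2 + α) := by
  simp only [pow_two, map_mul, map_add, Complex.conj_ofReal, gyroQuartic, Complex.mul_re,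
    Complex.conj_re, Complex.add_re, Complex.conj_im, mul_neg, neg_mul, neg_neg, Complex.ofReal_re,
    Complex.add_im, Complex.mul_im, Complex.ofReal_im, add_zero, sub_neg_eq_add, zero_mul, sub_zero,
    Complex.re_ofNat, mul_zero, Complex.im_ofNat, Complex.normSq_apply]
  ring

section

variable {α K a w : ℝ}

theorem re_neg_of_gyroQuartic_eq_zero (hα : 0 < α) (hK : 0 < K) (ha : 0 < a) (hw : w ≠ 0)
    {ρ : ℂ} (hρ : gyroQuartic α K a w ρ = 0) : ρ.re < 0 := by
  by_contra! hre
  have henergy := re_conj_mul_gyroQuartic α K a w ρ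
  rw [hρ, mul_zero, Complex.zero_re] at henergy
  have hdiss : a * Complex.normSq ρ * Complex.normSq (ρ ^ 2 + α) = 0 := by
    have n1 := Complex.normSq_nonneg ρ
    have n2 := Complex.normSq_nonneg (ρ ^ 2 + α)
    have hQ : 0 ≤ Complex.normSq ρ * (4 * w ^ 2 * Complex.normSq ρ + Complex.normSq (ρ ^ 2 + α))
        + 4 * α * w ^ 2 * Complex.normSq ρ + K * Complex.normSq (ρ ^ 2 + α) := by
      linarith [mul_nonneg hα.le (mul_nonneg (sq_nonneg w) n1), mul_nonneg hK.le n2,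
        mul_nonneg n1 n2, mul_nonneg (sq_nonneg w) (mul_nonneg n1 n1)]
    linarith [mul_nonneg hre hQ, mul_nonneg (mul_nonneg ha.le n1) n2]
  rcases mul_eq_zero.1 hdiss with h | h
  · rcases mul_eq_zero.1 h with h | h
    · exact ha.ne' h
    · rw [Complex.normSq_eq_zero.1 h] at hρ
      simp [gyroQuartic, hα.ne', hK.ne'] at hρ
  · have hZ : ρ ^ 2 = -α := eq_neg_of_add_eq_zero_left (Complex.normSq_eq_zero.1 h)
    rw [gyroQuartic, hZ] at hρ
    simp [hw, hα.ne'] at hρ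

theorem exists_nonneg_root_gyroQuartic (hα : 0 ≤ α) (ha : 0 ≤ a) (hK : K ≤ 0) :
    ∃ x : ℝ, 0 ≤ x ∧ gyroQuartic α K a w x = 0 := by
  let f : ℝ → ℝ := fun x ↦ (x ^ 2 + α) * (x ^ 2 + a * x + K) + 4 * w ^ 2 * x ^ 2
  have hf0 : f 0 ≤ 0 := by simp only [f]; nlinarith
  have hfR : 0 ≤ f √(-K) := by
    simp only [f]
    rw [Real.sq_sqrt (neg_nonneg.2 hK)]
    nlinarith [mul_nonneg ha (Real.sqrt_nonneg (-K)), sq_nonneg w]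
  obtain ⟨x, ⟨hx0, -⟩, hx⟩ := intermediate_value_Icc (Real.sqrt_nonneg _)
    (by fun_prop : Continuous f).continuousOn ⟨hf0, hfR⟩
  refine ⟨x, hx0, ?_⟩
  simp only [gyroQuartic]
  exact_mod_cast hx

theorem exists_re_eq_zero_root_gyroQuartic (hα : 0 ≤ α) (hK : 0 ≤ K) :
    ∃ ρ : ℂ, ρ.re = 0 ∧ gyroQuartic α K 0 w ρ = 0 := by
  let q : ℝ → ℝ := fun s ↦ (α - s) * (K - s) - 4 * w ^ 2 * s
  obtain ⟨s, ⟨hs0, -⟩, hs⟩ := intermediate_value_Icc' hα (by fun_prop : Continuous q).continuousOn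
    (show (0 : ℝ) ∈ Set.Icc (q α) (q 0) by constructor <;> simp only [q] <;> nlinarith)
  refine ⟨Complex.I * √s, by simp, ?_⟩
  have hρ2 : (Complex.I * √s) ^ 2 = -s := by
    rw [mul_pow, Complex.I_sq, ← Complex.ofReal_pow, Real.sq_sqrt hs0]; ring
  rw [gyroQuartic, hρ2, Complex.ofReal_zero, zero_mul, add_zero]
  have hs' : ((α - s) * (K - s) - 4 * w ^ 2 * s : ℂ) = 0 := by exact_mod_cast hs
  linear_combination hs'

theorem gyroQuartic_hurwitz_iff (hα : 0 < α) (ha : 0 ≤ a) (hw : w ≠ 0) :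
    (∀ ρ : ℂ, gyroQuartic α K a w ρ = 0 → ρ.re < 0) ↔ 0 < a ∧ 0 < K := by
  refine ⟨fun H ↦ ?_, fun ⟨ha, hK⟩ _ ↦ re_neg_of_gyroQuartic_eq_zero hα hK ha hw⟩
  have hK : 0 < K := by
    by_contra! hK
    obtain ⟨x, hx0, hx⟩ := exists_nonneg_root_gyroQuartic (w := w) hα.le ha hK
    exact (H x hx).not_ge (by simpa using hx0)
  refine ⟨ha.lt_of_ne fun ha0 ↦ ?_, hK⟩
  obtain ⟨ρ, hρ0, hρ⟩ := exists_re_eq_zero_root_gyroQuartic (w := w) hα.le hK.le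
  exact (H ρ (ha0 ▸ hρ)).ne hρ0

end

theorem deputy_relative_motion_stability_general (ω₀ mD mC k b : ℝ) (N : ℕ)
    (hω₀ : 0 < ω₀) (hmD : 0 < mD) (hmC : 0 < mC) (hb : 0 ≤ b)
    (mr : ℝ) (hmr : mr = mC * mD / ((N : ℝ) * mD + mC)) :
    (∀ ρ : ℂ,
        (Polynomial.aeval ρ)
          (Matrix.charpoly
            (!![0, 1, 0, 0;
                -3 * ω₀ ^ 2 * mr / mD, 0, 0, 2 * ω₀;
                0, 0, 0, 1;
                0, -2 * ω₀, 3 * ω₀ ^ 2 - k / mD, -b / mD] :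
              Matrix (Fin 4) (Fin 4) ℝ)) = 0 → ρ.re < 0) ↔
    (0 < b ∧ 3 * ω₀ ^ 2 * mD < k) := by
  have hmr_pos : 0 < mr := by rw [hmr]; positivity
  have hA : (!![0, 1, 0, 0; -3 * ω₀ ^ 2 * mr / mD, 0, 0, 2 * ω₀; 0, 0, 0, 1;
        0, -2 * ω₀, 3 * ω₀ ^ 2 - k / mD, -b / mD] : Matrix (Fin 4) (Fin 4) ℝ) =
      !![0, 1, 0, 0; -(3 * ω₀ ^ 2 * mr / mD), 0, 0, 2 * ω₀; 0, 0, 0, 1;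
        0, -2 * ω₀, -(k / mD - 3 * ω₀ ^ 2), -(b / mD)] := by
    simp only [neg_mul, neg_div, neg_sub]
  simp_rw [hA, aeval_charpoly_gyroMatrix]
  rw [gyroQuartic_hurwitz_iff (by positivity) (by positivity) hω₀.ne', div_pos_iff_of_pos_right hmD,
    sub_pos, lt_div_iff₀ hmD]

/-- Routh–Hurwitz analysis of the linearized in-plane dynamics of the relative
motion between deputy satellites: all complex eigenvalues (roots of the
characteristic polynomial) of the matrix `A₁` lie in the open left half-plane
iff `b > 0` and `k > 3ω₀²·m_D`. -/
theorem deputy_relative_motion_stability (ω₀ mD mC k b : ℝ) (N : ℕ)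
    (hω₀ : 0 < ω₀) (hmD : 0 < mD) (hmC : 0 < mC) (hk : 0 < k) (hb : 0 ≤ b)
    (hN : 0 < N) (mr : ℝ) (hmr : mr = mC * mD / ((N : ℝ) * mD + mC)) :
    (∀ ρ : ℂ,
        (Polynomial.aeval ρ)
          (Matrix.charpoly
            (!![0, 1, 0, 0;
                -3 * ω₀ ^ 2 * mr / mD, 0, 0, 2 * ω₀;
                0, 0, 0, 1;
                0, -2 * ω₀, 3 * ω₀ ^ 2 - k / mD, -b / mD] :
              Matrix (Fin 4) (Fin 4) ℝ)) = 0 → ρ.re < 0) ↔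
    (0 < b ∧ 3 * ω₀ ^ 2 * mD < k) :=
  deputy_relative_motion_stability_general ω₀ mD mC k b N hω₀ hmD hmC hb mr hmr
end

section
/- Let ω₀ > 0, m_D > 0, m_C > 0, k > 0 be reals with k ≥ 3ω₀²·m_D, let N be a positive integer, set m_r = m_C·m_D/(N·m_D + m_C), and let A₁ be the real 4×4 matrix with rows (0, 1, 0, 0), (−3ω₀²·m_r/m_D, 0, 0, 2ω₀), (0, 0, 0, 1), (0, −2ω₀, 3ω₀² − k/m_D, 0) (i.e., the case of zero damping b = 0). Then every complex eigenvalue ρ of A₁ is purely imaginary: Re ρ = 0. -/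
/-!
The characteristic polynomial of `A₁` is biquadratic, `X⁴ + (4ω₀² - p - q) X² + p q`, where
`p = -3ω₀² m_r / m_D` and `q = 3ω₀² - k / m_D` are both nonpositive under the stability condition.
As a quadratic in `X²` it then has nonnegative coefficients and nonnegative discriminant, so every
root `ρ` has `ρ²` real and nonpositive, i.e. `ρ` is purely imaginary.
-/

open Matrix Polynomial

theorem charpoly_gyroscopic_four {R : Type*} [CommRing R] (p q w : R) :
    (!![0, 1, 0, 0; p, 0, 0, w; 0, 0, 0, 1; 0, -w, q, 0] : Matrix (Fin 4) (Fin 4) R).charpoly =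
      X ^ 4 + C (w ^ 2 - p - q) * X ^ 2 + C (p * q) := by
  simp [Matrix.charpoly, charmatrix, Matrix.det_succ_row_zero, Fin.sum_univ_succ,
    Matrix.diagonal_apply, show Fin.succAbove (1 : Fin 4) 2 = 3 from rfl]
  ring

theorem Complex.re_eq_zero_of_sq_eq_ofReal_nonpos {z : ℂ} {t : ℝ} (ht : t ≤ 0) (hz : z ^ 2 = t) :
    z.re = 0 := by
  have him := congrArg Complex.im hz
  have hre := congrArg Complex.re hz
  simp only [sq, Complex.mul_im, Complex.mul_re, Complex.ofReal_im, Complex.ofReal_re] at him hre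
  rcases mul_eq_zero.mp (by linarith : z.re * z.im = 0) with h | h
  · exact h
  · rw [h] at hre; nlinarith

theorem exists_ofReal_nonpos_of_quadratic_eq_zero {B C : ℝ} (hB : 0 ≤ B) (hC : 0 ≤ C)
    (hdisc : 4 * C ≤ B ^ 2) {u : ℂ} (hu : u ^ 2 + B * u + C = 0) :
    ∃ t : ℝ, t ≤ 0 ∧ u = t := by
  set s := √(B ^ 2 - 4 * C)
  have hs : s * s = B ^ 2 - 4 * C := Real.mul_self_sqrt (by linarith)
  have hsB : s ≤ B := Real.sqrt_le_iff.mpr ⟨hB, by linarith⟩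
  have hdiscrim : discrim (1 : ℂ) B C = (s : ℂ) * s := by
    rw [discrim]; exact_mod_cast (by rw [hs]; ring : B ^ 2 - 4 * 1 * C = s * s)
  rcases (quadratic_eq_zero_iff one_ne_zero hdiscrim u).mp (by linear_combination hu) with h | h
  · exact ⟨(-B + s) / 2, by linarith, by rw [h]; push_cast; ring⟩
  · exact ⟨(-B - s) / 2, by linarith [Real.sqrt_nonneg (B ^ 2 - 4 * C)], by rw [h]; push_cast; ring⟩

theorem re_eq_zero_of_biquadratic_eq_zero {B C : ℝ} (hB : 0 ≤ B) (hC : 0 ≤ C)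
    (hdisc : 4 * C ≤ B ^ 2) {z : ℂ} (hz : z ^ 4 + B * z ^ 2 + C = 0) : z.re = 0 := by
  obtain ⟨t, ht, hzt⟩ :=
    exists_ofReal_nonpos_of_quadratic_eq_zero hB hC hdisc (u := z ^ 2) (by linear_combination hz)
  exact Complex.re_eq_zero_of_sq_eq_ofReal_nonpos ht hzt

theorem deputy_relative_motion_undamped_imaginary_general (ω₀ mD mC k : ℝ) (N : ℕ)
    (hmD : 0 < mD) (hmC : 0 < mC)
    (hstab : 3 * ω₀ ^ 2 * mD ≤ k)
    (mr : ℝ) (hmr : mr = mC * mD / ((N : ℝ) * mD + mC)) :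
    ∀ ρ : ℂ,
      (Polynomial.aeval ρ)
        (Matrix.charpoly
          (!![0, 1, 0, 0;
              -3 * ω₀ ^ 2 * mr / mD, 0, 0, 2 * ω₀;
              0, 0, 0, 1;
              0, -2 * ω₀, 3 * ω₀ ^ 2 - k / mD, 0] :
            Matrix (Fin 4) (Fin 4) ℝ)) = 0 → ρ.re = 0 := by
  intro ρ hρ
  set p := -3 * ω₀ ^ 2 * mr / mD
  set q := 3 * ω₀ ^ 2 - k / mD
  have hp : p ≤ 0 := by
    have hmr_nonneg : 0 ≤ mr := hmr ▸ by positivity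
    exact div_nonpos_of_nonpos_of_nonneg (by nlinarith [sq_nonneg ω₀]) hmD.le
  have hq : q ≤ 0 := sub_nonpos.mpr ((le_div_iff₀ hmD).mpr hstab)
  rw [show -2 * ω₀ = -(2 * ω₀) by ring, charpoly_gyroscopic_four] at hρ
  refine re_eq_zero_of_biquadratic_eq_zero (B := (2 * ω₀) ^ 2 - p - q) (C := p * q)
    (by nlinarith [sq_nonneg ω₀]) (mul_nonneg_of_nonpos_of_nonpos hp hq)
    (by nlinarith [sq_nonneg (p - q), sq_nonneg ω₀]) ?_
  simpa using hρ

/-- In the undamped case `b = 0`, if `k ≥ 3ω₀²·m_D`, then every complex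
eigenvalue (root of the characteristic polynomial) of the matrix `A₁` of the
linearized in-plane relative motion between deputy satellites is purely
imaginary. -/
theorem deputy_relative_motion_undamped_imaginary (ω₀ mD mC k : ℝ) (N : ℕ)
    (hω₀ : 0 < ω₀) (hmD : 0 < mD) (hmC : 0 < mC) (hk : 0 < k)
    (hstab : 3 * ω₀ ^ 2 * mD ≤ k)
    (hN : 0 < N) (mr : ℝ) (hmr : mr = mC * mD / ((N : ℝ) * mD + mC)) :
    ∀ ρ : ℂ,
      (Polynomial.aeval ρ)
        (Matrix.charpoly
          (!![0, 1, 0, 0;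
              -3 * ω₀ ^ 2 * mr / mD, 0, 0, 2 * ω₀;
              0, 0, 0, 1;
              0, -2 * ω₀, 3 * ω₀ ^ 2 - k / mD, 0] :
            Matrix (Fin 4) (Fin 4) ℝ)) = 0 → ρ.re = 0 :=
  deputy_relative_motion_undamped_imaginary_general ω₀ mD mC k N hmD hmC hstab mr hmr
end

section
/- Let ω₀ > 0, m_D > 0, m_C > 0, b ≥ 0 be reals, let N be a positive integer, set m_r = m_C·m_D/(N·m_D + m_C), and let 0 < k < 3ω₀²·m_D. Then the real 4×4 matrix A₁ with rows (0, 1, 0, 0), (−3ω₀²·m_r/m_D, 0, 0, 2ω₀), (0, 0, 0, 1), (0, −2ω₀, 3ω₀² − k/m_D, −b/m_D) has a real eigenvalue ρ > 0. -/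
/-!
The characteristic polynomial of `A₁` is monic of degree four, so it tends to `+∞`, while its
value at `0` is `det A₁ = (-3ω₀²m_r/m_D)·(3ω₀² - k/m_D)`, which is negative exactly when the
stability condition fails. The intermediate value theorem then gives a positive root.
-/

open Matrix Polynomial Filter

theorem Polynomial.Monic.exists_pos_isRoot_of_eval_zero_neg {p : ℝ[X]} (hp : p.Monic)
    (h0 : p.eval 0 < 0) : ∃ ρ : ℝ, 0 < ρ ∧ p.IsRoot ρ := by
  have hdeg : 0 < p.degree := hp.degree_pos.mpr <| by
    rintro rfl
    norm_num at h0
  obtain ⟨x, hx⟩ := ((p.tendsto_atTop_of_leadingCoeff_nonneg hdeg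
    (hp.leadingCoeff ▸ zero_le_one)).eventually (eventually_gt_atTop 0) |>.and
    (eventually_gt_atTop 0)).exists
  obtain ⟨ρ, hρ, hroot⟩ := intermediate_value_Icc hx.2.le p.continuous.continuousOn
    ⟨h0.le, hx.1.le⟩
  refine ⟨ρ, hρ.1.lt_of_ne ?_, hroot⟩
  rintro rfl
  exact h0.ne hroot

theorem Matrix.eval_charpoly_zero_of_even_card {n R : Type*} [Fintype n] [DecidableEq n]
    [CommRing R] (M : Matrix n n R) (hn : Even (Fintype.card n)) :
    M.charpoly.eval 0 = M.det := by
  rw [det_eq_sign_charpoly_coeff, hn.neg_one_pow, one_mul, coeff_zero_eq_eval_zero]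

theorem Matrix.det_fin_four_of_unit_rows {R : Type*} [CommRing R] (a c d e f : R) :
    (!![0, 1, 0, 0; a, 0, 0, c; 0, 0, 0, 1; 0, f, d, e] : Matrix (Fin 4) (Fin 4) R).det
      = a * d := by
  simp [det_succ_row_zero, Fin.sum_univ_succ, Fin.succAbove]

theorem deputy_relative_motion_unstable_general (ω₀ mD mC k b : ℝ) (N : ℕ)
    (hω₀ : 0 < ω₀) (hmD : 0 < mD) (hmC : 0 < mC)
    (hk' : k < 3 * ω₀ ^ 2 * mD)
    (mr : ℝ) (hmr : mr = mC * mD / ((N : ℝ) * mD + mC)) :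
    ∃ ρ : ℝ, 0 < ρ ∧
      (Matrix.charpoly
        (!![0, 1, 0, 0;
            -3 * ω₀ ^ 2 * mr / mD, 0, 0, 2 * ω₀;
            0, 0, 0, 1;
            0, -2 * ω₀, 3 * ω₀ ^ 2 - k / mD, -b / mD] :
          Matrix (Fin 4) (Fin 4) ℝ)).IsRoot ρ := by
  have hmr_pos : 0 < mr := hmr ▸ by positivity
  have hx_coupling : -3 * ω₀ ^ 2 * mr / mD < 0 := by
    rw [neg_mul, neg_mul, neg_div, neg_lt_zero]
    positivity
  have hz_stiffness : 0 < 3 * ω₀ ^ 2 - k / mD := by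
    rw [sub_pos, div_lt_iff₀ hmD]
    exact hk'
  refine (charpoly_monic _).exists_pos_isRoot_of_eval_zero_neg ?_
  rw [eval_charpoly_zero_of_even_card _ (by decide), det_fin_four_of_unit_rows]
  exact mul_neg_of_neg_of_pos hx_coupling hz_stiffness

/-- If the stability condition is violated (`0 < k < 3ω₀²·m_D`), then the matrix
`A₁` of the linearized in-plane relative motion between deputy satellites has a
positive real eigenvalue (a positive real root of its characteristic
polynomial), so the vertical equilibrium is unstable. -/
theorem deputy_relative_motion_unstable (ω₀ mD mC k b : ℝ) (N : ℕ)
    (hω₀ : 0 < ω₀) (hmD : 0 < mD) (hmC : 0 < mC) (hb : 0 ≤ b)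
    (hk : 0 < k) (hk' : k < 3 * ω₀ ^ 2 * mD)
    (hN : 0 < N) (mr : ℝ) (hmr : mr = mC * mD / ((N : ℝ) * mD + mC)) :
    ∃ ρ : ℝ, 0 < ρ ∧
      (Matrix.charpoly
        (!![0, 1, 0, 0;
            -3 * ω₀ ^ 2 * mr / mD, 0, 0, 2 * ω₀;
            0, 0, 0, 1;
            0, -2 * ω₀, 3 * ω₀ ^ 2 - k / mD, -b / mD] :
          Matrix (Fin 4) (Fin 4) ℝ)).IsRoot ρ :=
  deputy_relative_motion_unstable_general ω₀ mD mC k b N hω₀ hmD hmC hk' mr hmr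
end

section
/- Let ω₀ > 0, m_C > 0, m_D > 0 be reals, N a positive integer, and define ω_x = ω₀·√(3m_C/(N·m_D + m_C)) and ω_y = ω₀·√((4m_C + N·m_D)/(m_C + N·m_D)). Let p, q be positive integers. Then ω_x/ω_y = p/q if and only if N·m_D/m_C = 3q²/p² − 4; moreover, in that case p/q < √3/2, ω_x = p·ω₀/√(q² − p²), and ω_y = q·ω₀/√(q² − p²). -/
open Real

/-- The commensurability condition on the linearized oscillation frequencies
`ω_x = ω₀√(3m_C/(N·m_D + m_C))` and `ω_y = ω₀√((4m_C + N·m_D)/(m_C + N·m_D))`: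
`ω_x/ω_y = p/q` iff `N·m_D/m_C = 3q²/p² - 4`; and in that case `p/q < √3/2`,
`ω_x = p·ω₀/√(q² - p²)` and `ω_y = q·ω₀/√(q² - p²)`. -/
theorem frequency_commensurability (ω₀ mC mD : ℝ) (N p q : ℕ)
    (hω₀ : 0 < ω₀) (hmC : 0 < mC) (hmD : 0 < mD)
    (hN : 0 < N) (hp : 0 < p) (hq : 0 < q)
    (ωx ωy : ℝ)
    (hωx : ωx = ω₀ * Real.sqrt (3 * mC / ((N : ℝ) * mD + mC)))
    (hωy : ωy = ω₀ * Real.sqrt ((4 * mC + (N : ℝ) * mD) / (mC + (N : ℝ) * mD))) :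
    (ωx / ωy = (p : ℝ) / (q : ℝ) ↔
      (N : ℝ) * mD / mC = 3 * (q : ℝ) ^ 2 / (p : ℝ) ^ 2 - 4) ∧
    (ωx / ωy = (p : ℝ) / (q : ℝ) →
      ((p : ℝ) / (q : ℝ) < Real.sqrt 3 / 2 ∧
       ωx = (p : ℝ) * ω₀ / Real.sqrt ((q : ℝ) ^ 2 - (p : ℝ) ^ 2) ∧
       ωy = (q : ℝ) * ω₀ / Real.sqrt ((q : ℝ) ^ 2 - (p : ℝ) ^ 2))) := by
  have hPpos : (0:ℝ) < (p:ℝ) := by exact_mod_cast hp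
  have hQpos : (0:ℝ) < (q:ℝ) := by exact_mod_cast hq
  have hNpos : (0:ℝ) < (N:ℝ) := by exact_mod_cast hN
  set P : ℝ := (p : ℝ)
  set Q : ℝ := (q : ℝ)
  set s : ℝ := (N : ℝ) * mD with hsdef
  have hspos : 0 < s := mul_pos hNpos hmD
  have h1 : (0:ℝ) < s + mC := by linarith
  have h2 : (0:ℝ) < 4 * mC + s := by linarith
  have h3 : (0:ℝ) < mC + s := by linarith
  -- the ratio
  have hratio : ωx / ωy = Real.sqrt (3 * mC / (4 * mC + s)) := by
    rw [hωx, hωy, mul_div_mul_left _ _ (ne_of_gt hω₀),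
      ← Real.sqrt_div (by positivity)]
    congr 1
    field_simp
    ring
  -- forward direction
  have hfwd : ωx / ωy = P / Q → s / mC = 3 * Q ^ 2 / P ^ 2 - 4 := by
    intro h
    have hsq : 3 * mC / (4 * mC + s) = (P / Q) ^ 2 := by
      rw [← Real.sq_sqrt (show (0:ℝ) ≤ 3 * mC / (4 * mC + s) by positivity),
        ← hratio, h]
    field_simp at hsq ⊢
    linear_combination -hsq
  -- backward direction
  have hbwd : s / mC = 3 * Q ^ 2 / P ^ 2 - 4 → ωx / ωy = P / Q := by
    intro h
    have hs' : s * P ^ 2 = mC * (3 * Q ^ 2 - 4 * P ^ 2) := by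
      field_simp at h
      linear_combination h
    have hkey : 3 * mC / (4 * mC + s) = (P / Q) ^ 2 := by
      field_simp
      linear_combination -hs'
    rw [hratio, hkey, Real.sqrt_sq (by positivity)]
  refine ⟨⟨hfwd, hbwd⟩, fun h => ?_⟩
  have hk := hfwd h
  have hs' : s * P ^ 2 = mC * (3 * Q ^ 2 - 4 * P ^ 2) := by
    field_simp at hk
    linear_combination hk
  have hpos : 0 < mC * (3 * Q ^ 2 - 4 * P ^ 2) :=
    hs' ▸ mul_pos hspos (pow_pos hPpos 2)
  have h34 : 4 * P ^ 2 < 3 * Q ^ 2 := by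
    by_contra hc
    push_neg at hc
    nlinarith [hpos, hmC]
  have hQP : P ^ 2 < Q ^ 2 := by nlinarith
  have hQP' : (0:ℝ) < Q ^ 2 - P ^ 2 := by linarith
  have sqrt4 : Real.sqrt 4 = 2 := by
    rw [show (4:ℝ) = 2 ^ 2 by norm_num, Real.sqrt_sq (by norm_num)]
  constructor
  · have : Real.sqrt 3 / 2 = Real.sqrt (3 / 4) := by
      rw [Real.sqrt_div (by norm_num : (0:ℝ) ≤ 3), sqrt4]
    rw [this]
    rw [show P / Q = Real.sqrt ((P / Q) ^ 2) by
      rw [Real.sqrt_sq (by positivity)]]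
    apply Real.sqrt_lt_sqrt (by positivity)
    rw [div_pow, div_lt_div_iff₀ (by positivity) (by norm_num)]
    nlinarith
  constructor
  · have hA : 3 * mC / (s + mC) = P ^ 2 / (Q ^ 2 - P ^ 2) := by
      field_simp
      linear_combination -hs'
    rw [hωx, hA, Real.sqrt_div (by positivity), Real.sqrt_sq hPpos.le]
    ring
  · have hB : (4 * mC + s) / (mC + s) = Q ^ 2 / (Q ^ 2 - P ^ 2) := by
      field_simp
      linear_combination -hs'
    rw [hωy, hB, Real.sqrt_div (by positivity), Real.sqrt_sq hQpos.le]
    ring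
end

section
/- Let ω_x > 0 and ω_y > 0 be reals such that ω_x/ω_y is irrational, let a > 0, b > 0, and φ₁, φ₂ ∈ ℝ. Then for every ε > 0 there exists t ≥ 0 such that |a·sin(ω_x·t + φ₁)| < ε and |b·sin(ω_y·t + φ₂)| < ε; i.e., the planar curve t ↦ (a·sin(ω_x·t + φ₁), b·sin(ω_y·t + φ₂)) comes arbitrarily close to the origin. -/
/-!
At the times `t = (Kπ - φ₁)/ωx`, `K ∈ ℕ`, the first coordinate vanishes exactly, and the second
is `b · sin (K · πωy/ωx + c)` for a constant `c`. Since `ωy/ωx` is irrational, the multiples of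
`πωy/ωx` are dense in `ℝ/πℤ`, and in a compact group the closure of the `ℕ`-multiples of an
element equals that of its `ℤ`-multiples, so arbitrarily large `K` bring the second argument
close to `πℤ`, where `sin` is small.
-/

open Real Filter

theorem AddCircle.exists_nsmul_dist_lt {p a : ℝ} [Fact (0 < p)] (h : Irrational (a / p))
    (x : AddCircle p) {δ : ℝ} (hδ : 0 < δ) (N : ℕ) :
    ∃ n ≥ N, dist (n • (a : AddCircle p)) x < δ := by
  have hx : MapClusterPt x atTop (· • (a : AddCircle p) : ℕ → AddCircle p) := by
    refine ((mapClusterPt_atTop_nsmul_tfae x (a : AddCircle p)).out 0 3).mpr ?_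
    rw [(denseRange_zsmul_coe_iff.mpr h).closure_range]
    exact Set.mem_univ x
  exact frequently_atTop.mp (hx.frequently (Metric.ball_mem_nhds x hδ)) N

theorem abs_sin_le_norm_coe_addCircle_pi (x : ℝ) : |sin x| ≤ ‖(x : AddCircle π)‖ := by
  rw [AddCircle.norm_eq]
  calc |sin x| = |sin (x - round (π⁻¹ * x) * π)| := by
        rw [sin_sub_int_mul_pi, abs_mul, abs_neg_one_zpow, one_mul]
    _ ≤ _ := abs_sin_le_abs

theorem exists_nat_abs_sin_nat_mul_add_lt {θ : ℝ} (hθ : Irrational (θ / π)) (c : ℝ) {δ : ℝ}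
    (hδ : 0 < δ) (N : ℕ) : ∃ n ≥ N, |sin (n * θ + c)| < δ := by
  have : Fact (0 < π) := ⟨pi_pos⟩
  obtain ⟨n, hn, hdist⟩ := AddCircle.exists_nsmul_dist_lt hθ (-(c : AddCircle π)) hδ N
  refine ⟨n, hn, (abs_sin_le_norm_coe_addCircle_pi _).trans_lt ?_⟩
  rwa [dist_eq_norm, sub_neg_eq_add, ← AddCircle.coe_nsmul, ← AddCircle.coe_add,
    nsmul_eq_mul] at hdist

theorem incommensurate_close_approach_general (ωx ωy a b φ₁ φ₂ : ℝ)
    (hωx : 0 < ωx) (hirr : Irrational (ωx / ωy))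
    (hb : 0 < b) :
    ∀ ε > 0, ∃ t : ℝ, 0 ≤ t ∧
      |a * Real.sin (ωx * t + φ₁)| < ε ∧ |b * Real.sin (ωy * t + φ₂)| < ε := by
  intro ε hε
  set α := ωy / ωx with hα_def
  have hα : Irrational (α * π / π) := by
    rw [hα_def, mul_div_cancel_right₀ _ pi_ne_zero, ← inv_div]
    exact hirr.inv
  obtain ⟨N, hN⟩ := exists_nat_ge (φ₁ / π)
  obtain ⟨K, hKN, hK⟩ :=
    exists_nat_abs_sin_nat_mul_add_lt hα (φ₂ - α * φ₁) (div_pos hε hb) N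
  have hφ₁K : φ₁ ≤ K * π := by
    rw [div_le_iff₀ pi_pos] at hN
    exact hN.trans (by gcongr)
  have hx : ωx * ((K * π - φ₁) / ωx) + φ₁ = K * π := by field_simp; ring
  have hy : ωy * ((K * π - φ₁) / ωx) + φ₂ = K * (α * π) + (φ₂ - α * φ₁) := by
    simp only [α]; field_simp; ring
  refine ⟨(K * π - φ₁) / ωx, div_nonneg (by linarith) hωx.le, ?_, ?_⟩
  · rwa [hx, sin_nat_mul_pi, mul_zero, abs_zero]
  · rw [hy, abs_mul, abs_of_pos hb]
    calc b * |sin (K * (α * π) + (φ₂ - α * φ₁))| < b * (ε / b) := by gcongr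
      _ = ε := mul_div_cancel₀ ε hb.ne'

/-- If the oscillation frequencies `ω_x, ω_y` are incommensurate (their ratio is
irrational), then the curve `t ↦ (a·sin(ω_x t + φ₁), b·sin(ω_y t + φ₂))` comes
arbitrarily close to the origin. -/
theorem incommensurate_close_approach (ωx ωy a b φ₁ φ₂ : ℝ)
    (hωx : 0 < ωx) (hωy : 0 < ωy) (hirr : Irrational (ωx / ωy))
    (ha : 0 < a) (hb : 0 < b) :
    ∀ ε > 0, ∃ t : ℝ, 0 ≤ t ∧
      |a * Real.sin (ωx * t + φ₁)| < ε ∧ |b * Real.sin (ωy * t + φ₂)| < ε :=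
  incommensurate_close_approach_general ωx ωy a b φ₁ φ₂ hωx hirr hb
end
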